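/- arXiv:1512.02375 — 11 statements merged into one kernel-verified Lean document; each statement's English description precedes it below -/
import Mathlib

section
/- Let V be a Hilbert space, a(·,·) a symmetric, continuous, coercive bilinear form on V, ℓ ∈ V', X a pre-Hilbert space with complete subspace X₀, T : V → X a bounded linear operator, and b ∈ X. Define V_b = {v ∈ V : Tv ∈ X₀ + b}. Then the quadratic functional J(v) = ½ a(v,v) − ℓ(v) has a unique minimizer on V_b if and only if V_b is nonempty. -/
/-- the quadratic functional `J(v) = ½ a(v,v) − ℓ(v)` has a unique minimizer
on `V_b = {v | T v ∈ X₀ + b}` if and only if `V_b` is nonempty. -/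
theorem stmt0
    {V : Type*} [NormedAddCommGroup V] [InnerProductSpace ℝ V] [CompleteSpace V]
    {X : Type*} [NormedAddCommGroup X] [InnerProductSpace ℝ X]
    (a : V →ₗ[ℝ] V →ₗ[ℝ] ℝ) (hsymm : ∀ v w, a v w = a w v)
    (γ Γ : ℝ) (hγ : 0 < γ) (hΓ : 0 < Γ)
    (hcoer : ∀ v, γ * ‖v‖ ^ 2 ≤ a v v)
    (hbound : ∀ v w, a v w ≤ Γ * ‖v‖ * ‖w‖)
    (ℓ : V →L[ℝ] ℝ)
    (X₀ : Submodule ℝ X) (hX₀ : IsComplete (X₀ : Set X))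
    (T : V →L[ℝ] X) (b : X)
    (J : V → ℝ) (hJ : ∀ v, J v = (1 / 2) * a v v - ℓ v)
    (Vb : Set V) (hVb : Vb = {v : V | ∃ x ∈ X₀, T v = x + b}) :
    (∃! u, u ∈ Vb ∧ ∀ v ∈ Vb, J u ≤ J v) ↔ Vb.Nonempty := by
  constructor
  · rintro ⟨u, ⟨hu, -⟩, -⟩; exact ⟨u, hu⟩
  rintro ⟨v₀, hv₀⟩
  -- absolute bound on a
  have habs : ∀ v w, ‖a v w‖ ≤ Γ * ‖v‖ * ‖w‖ := by
    intro v w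
    rw [Real.norm_eq_abs, abs_le]
    refine ⟨?_, hbound v w⟩
    have h := hbound (-v) w
    simp only [map_neg, LinearMap.neg_apply, norm_neg] at h
    linarith
  set A : V →L[ℝ] V →L[ℝ] ℝ := LinearMap.mkContinuous₂ a Γ habs with hA
  have hAa : ∀ v w, A v w = a v w := fun v w => a.mkContinuous₂_apply habs v w
  -- Vb as a preimage
  have hVb' : Vb = (fun v => T v - b) ⁻¹' (X₀ : Set X) := by
    rw [hVb]; ext v
    constructor
    · rintro ⟨x, hx, hxe⟩
      simp only [Set.mem_preimage, SetLike.mem_coe, hxe, add_sub_cancel_right]; exact hx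
    · intro hv
      exact ⟨T v - b, hv, by abel⟩
  have hclosed : IsClosed Vb := by
    rw [hVb']
    exact hX₀.isClosed.preimage (T.continuous.sub continuous_const)
  -- convexity via midpoints
  have hmid : ∀ u ∈ Vb, ∀ v ∈ Vb, (1/2 : ℝ) • (u + v) ∈ Vb := by
    rw [hVb']
    intro u hu v hv
    simp only [Set.mem_preimage, SetLike.mem_coe, map_smul, map_add] at *
    have heq : (1/2 : ℝ) • (T u + T v) - b = (1/2 : ℝ) • (T u - b) + (1/2 : ℝ) • (T v - b) := by
      module
    rw [heq]
    exact X₀.add_mem (X₀.smul_mem _ hu) (X₀.smul_mem _ hv)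
  -- key parallelogram identity
  have hkey : ∀ u v : V, J u + J v = 2 * J ((1/2 : ℝ) • (u + v)) + (1/4) * a (u - v) (u - v) := by
    intro u v
    simp only [hJ, map_add, map_sub, map_smul, smul_eq_mul, LinearMap.add_apply,
      LinearMap.sub_apply, LinearMap.smul_apply]
    ring
  -- lower bound
  have hlb : ∀ v, -(‖ℓ‖ ^ 2 / (2 * γ)) ≤ J v := by
    intro v
    have h1 := hcoer v
    have h2 : ℓ v ≤ ‖ℓ‖ * ‖v‖ := by
      calc ℓ v ≤ |ℓ v| := le_abs_self _
        _ = ‖ℓ v‖ := (Real.norm_eq_abs _).symm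
        _ ≤ ‖ℓ‖ * ‖v‖ := ℓ.le_opNorm v
    have hql : ‖ℓ‖ * ‖v‖ - γ/2 * ‖v‖ ^ 2 ≤ ‖ℓ‖ ^ 2 / (2 * γ) := by
      rw [le_div_iff₀ (by positivity : (0:ℝ) < 2 * γ)]
      nlinarith [sq_nonneg (γ * ‖v‖ - ‖ℓ‖)]
    rw [hJ]
    linarith
  set S := J '' Vb with hS
  have hSne : S.Nonempty := ⟨J v₀, v₀, hv₀, rfl⟩
  have hSbdd : BddBelow S := ⟨-(‖ℓ‖ ^ 2 / (2 * γ)), by rintro x ⟨v, -, rfl⟩; exact hlb v⟩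
  set m := sInf S with hm
  have hmle : ∀ v ∈ Vb, m ≤ J v := fun v hv => csInf_le hSbdd ⟨v, hv, rfl⟩
  -- minimizing sequence
  have hseq : ∀ n : ℕ, ∃ u, u ∈ Vb ∧ J u < m + 1/(n+1) := by
    intro n
    have hpos : (0:ℝ) < 1/(n+1) := by positivity
    have hlt : sInf S < m + 1/(n+1) := lt_add_of_pos_right _ hpos
    obtain ⟨x, ⟨v, hv, rfl⟩, hxlt⟩ := (csInf_lt_iff hSbdd hSne).mp hlt
    exact ⟨v, hv, hxlt⟩
  choose u hu hJu using hseq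
  -- distance estimate between members of the sequence
  have hdist : ∀ p q : V, p ∈ Vb → q ∈ Vb →
      γ/4 * ‖p - q‖ ^ 2 ≤ J p + J q - 2 * m := by
    intro p q hp hq
    have hw := hmle _ (hmid p hp q hq)
    have hk := hkey p q
    have hc := hcoer (p - q)
    linarith
  -- Cauchy
  have hcauchy : CauchySeq u := by
    apply cauchySeq_of_le_tendsto_0 (fun N : ℕ => Real.sqrt (8/γ * (1/(N+1))))
    · intro n k N hn hk
      have h1 : J (u n) < m + 1/(N+1) := by
        refine lt_of_lt_of_le (hJu n) ?_
        have hNn : (N:ℝ) ≤ n := Nat.cast_le.mpr hn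
        have : (1:ℝ)/(n+1) ≤ 1/(N+1) := by
          apply one_div_le_one_div_of_le (by positivity)
          linarith
        linarith
      have h2 : J (u k) < m + 1/(N+1) := by
        refine lt_of_lt_of_le (hJu k) ?_
        have hNk : (N:ℝ) ≤ k := Nat.cast_le.mpr hk
        have : (1:ℝ)/(k+1) ≤ 1/(N+1) := by
          apply one_div_le_one_div_of_le (by positivity)
          linarith
        linarith
      have h3 := hdist (u n) (u k) (hu n) (hu k)
      rw [dist_eq_norm]
      have hγ4 : (0:ℝ) < γ/4 := by positivity
      have h5 : γ/4 * ‖u n - u k‖ ^ 2 ≤ γ/4 * (8/γ * (1/(N+1))) := by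
        have h6 : γ/4 * (8/γ * (1/(N+1))) = 2 * (1/(N+1 : ℝ)) := by
          field_simp; ring
        rw [h6]; linarith
      have h4 : ‖u n - u k‖ ^ 2 ≤ 8/γ * (1/(N+1)) := le_of_mul_le_mul_left h5 hγ4
      calc ‖u n - u k‖ = Real.sqrt (‖u n - u k‖ ^ 2) := by
            rw [Real.sqrt_sq (norm_nonneg _)]
        _ ≤ Real.sqrt (8/γ * (1/(N+1))) := Real.sqrt_le_sqrt h4
    · have h0 : Filter.Tendsto (fun N : ℕ => 8/γ * (1/(N+1 : ℝ))) Filter.atTop (nhds 0) := by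
        have := tendsto_one_div_add_atTop_nhds_zero_nat.const_mul (8/γ)
        simpa using this
      have := h0.sqrt
      simpa using this
  obtain ⟨x, hx⟩ := cauchySeq_tendsto_of_complete hcauchy
  have hxVb : x ∈ Vb := hclosed.mem_of_tendsto hx (Filter.Eventually.of_forall hu)
  -- continuity of J
  have hJcont : Continuous J := by
    have h1 : Continuous fun v : V => A v v :=
      A.isBoundedBilinearMap.continuous.comp (continuous_id.prodMk continuous_id)
    have hJeq : J = fun v => (1/2) * A v v - ℓ v := funext fun v => by rw [hJ, hAa]
    rw [hJeq]
    exact (continuous_const.mul h1).sub ℓ.continuous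
  -- J (u n) → m
  have hJm : Filter.Tendsto (fun n => J (u n)) Filter.atTop (nhds m) := by
    apply tendsto_of_tendsto_of_tendsto_of_le_of_le (g := fun _ => m)
      (h := fun n : ℕ => m + 1/(n+1)) tendsto_const_nhds
    · have := tendsto_one_div_add_atTop_nhds_zero_nat.const_add m
      simpa using this
    · exact fun n => hmle _ (hu n)
    · exact fun n => (hJu n).le
  have hJx : J x = m :=
    tendsto_nhds_unique ((hJcont.tendsto x).comp hx) hJm
  refine ⟨x, ⟨hxVb, fun v hv => hJx ▸ hmle v hv⟩, ?_⟩
  rintro y ⟨hyVb, hymin⟩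
  have hyx : J y = m := le_antisymm (hJx ▸ hymin x hxVb) (hmle y hyVb)
  have h3 := hdist y x hyVb hxVb
  rw [hyx, hJx] at h3
  have hγ4 : (0:ℝ) < γ/4 := by positivity
  have h5 : ‖y - x‖ ^ 2 ≤ 0 := by
    have := le_of_mul_le_mul_left (by linarith : γ/4 * ‖y - x‖ ^ 2 ≤ γ/4 * 0) hγ4
    linarith
  have h6 : ‖y - x‖ ^ 2 = 0 := le_antisymm h5 (sq_nonneg _)
  exact norm_sub_eq_zero_iff.mp (sq_eq_zero_iff.mp h6)
end

section
/- Let V be a Hilbert space, a(·,·) symmetric continuous coercive bilinear form, ℓ ∈ V', and T₁,…,T_N ∈ V' linearly independent functionals, b ∈ ℝᴺ. Define φ₀ ∈ V by a(φ₀, v) = ℓ(v) for all v, and φ_i ∈ V by a(φ_i, v) = T_i(v) for all v, and the Gramian matrix A with entries A_{ij} = a(φ_i, φ_j). Then A is invertible, and the unique minimizer of J(v) = ½ a(v,v) − ℓ(v) subject to the constraints T_i(u) = b_i (i = 1,…,N) is u = φ₀ + Σᵢ U_i φ_i with U = A⁻¹(b − Tφ₀), where Tφ₀ = (T_i φ₀)_i.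 -/
/-- finite dimensionally constrained minimization.  With linearly
independent functionals `T₁,…,T_N`, representers `φ₀` of `ℓ` and `φᵢ` of `Tᵢ`, the
Gramian matrix `A = (a(φᵢ,φⱼ))` is invertible and
`u = φ₀ + Σᵢ Uᵢ φᵢ`, `U = A⁻¹ (b − Tφ₀)`, is the unique minimizer of `J` subject
to `Tᵢ u = bᵢ`. -/
theorem stmt2
    {V : Type*} [NormedAddCommGroup V] [InnerProductSpace ℝ V] [CompleteSpace V]
    (a : V →ₗ[ℝ] V →ₗ[ℝ] ℝ) (hsymm : ∀ v w, a v w = a w v)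
    (γ Γ : ℝ) (hγ : 0 < γ) (hΓ : 0 < Γ)
    (hcoer : ∀ v, γ * ‖v‖ ^ 2 ≤ a v v)
    (hbound : ∀ v w, a v w ≤ Γ * ‖v‖ * ‖w‖)
    (ℓ : V →L[ℝ] ℝ)
    (J : V → ℝ) (hJ : ∀ v, J v = (1 / 2) * a v v - ℓ v)
    {N : ℕ} (T : Fin N → V →L[ℝ] ℝ) (hT : LinearIndependent ℝ T)
    (b : Fin N → ℝ)
    (φ₀ : V) (hφ₀ : ∀ v, a φ₀ v = ℓ v)
    (φ : Fin N → V) (hφ : ∀ i v, a (φ i) v = T i v)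
    (A : Matrix (Fin N) (Fin N) ℝ) (hA : ∀ i j, A i j = a (φ i) (φ j))
    (U : Fin N → ℝ) (hU : U = A⁻¹.mulVec (fun i => b i - T i φ₀))
    (u : V) (hu : u = φ₀ + ∑ i, U i • φ i) :
    IsUnit A.det ∧
      (∀ i, T i u = b i) ∧
      (∀ v : V, (∀ i, T i v = b i) → J u ≤ J v) ∧
      (∀ u' : V, (∀ i, T i u' = b i) →
        (∀ v : V, (∀ i, T i v = b i) → J u' ≤ J v) → u' = u) := by
  -- coercivity: a w w ≤ 0 → w = 0
  have hzero : ∀ w : V, a w w ≤ 0 → w = 0 := by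
    intro w hw
    have h := hcoer w
    have hsq : ‖w‖ ^ 2 ≤ 0 := by nlinarith [sq_nonneg ‖w‖]
    have hn : ‖w‖ = 0 := by nlinarith [norm_nonneg w, sq_nonneg ‖w‖]
    exact norm_eq_zero.mp hn
  have hpos : ∀ w : V, 0 ≤ a w w := fun w => le_trans (by positivity) (hcoer w)
  -- Step 1: A.det is a unit
  have hdet : IsUnit A.det := by
    rw [isUnit_iff_ne_zero]
    intro hd
    obtain ⟨c, hc, hMc⟩ := Matrix.exists_mulVec_eq_zero_iff.mpr hd
    set w : V := ∑ i, c i • φ i with hw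
    have hφw : ∀ v : V, a w v = ∑ i, c i * T i v := by
      intro v
      rw [hw, map_sum, LinearMap.sum_apply]
      refine Finset.sum_congr rfl fun i _ => ?_
      rw [map_smul, LinearMap.smul_apply, smul_eq_mul, hφ]
    have hAi : ∀ i, a (φ i) w = A.mulVec c i := by
      intro i
      rw [hw, map_sum]
      simp [Matrix.mulVec, dotProduct, hA, mul_comm]
    have hTiw : ∀ i, T i w = 0 := by
      intro i
      rw [← hφ i w, hAi i, hMc]
      rfl
    have haww : a w w = 0 := by
      rw [hφw w]
      simp [hTiw]
    have hw0 : w = 0 := hzero w haww.le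
    have hTc : ∀ v : V, ∑ i, c i * T i v = 0 := by
      intro v
      rw [← hφw v, hw0]
      simp
    have hci : ∀ i, c i = 0 := by
      refine Fintype.linearIndependent_iff.mp hT c ?_
      ext v
      simpa using hTc v
    exact hc (funext hci)
  -- A.mulVec U = b - Tφ₀
  have hAU : A.mulVec U = fun i => b i - T i φ₀ := by
    rw [hU, Matrix.mulVec_mulVec, Matrix.mul_nonsing_inv A hdet]
    simp
  -- T values at u
  have hTu : ∀ i, T i u = b i := by
    intro i
    have hTφ : ∀ j, T i (φ j) = A i j := by
      intro j
      rw [hA, ← hφ i (φ j)]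
    rw [hu, map_add, map_sum]
    have : ∑ j, T i (U j • φ j) = A.mulVec U i := by
      simp [Matrix.mulVec, dotProduct, hTφ, mul_comm]
    rw [this, hAU]
    ring
  -- key identity: a u w = ℓ w + ∑ i, U i * T i w
  have key : ∀ w : V, a u w = ℓ w + ∑ i, U i * T i w := by
    intro w
    rw [hu, map_add, LinearMap.add_apply, hφ₀, map_sum, LinearMap.sum_apply]
    congr 1
    refine Finset.sum_congr rfl fun i _ => ?_
    rw [map_smul, LinearMap.smul_apply, smul_eq_mul, hφ]
  -- expansion of J
  have expand : ∀ v : V, J v = J u + (a u (v - u) - ℓ (v - u)) + (1/2) * a (v - u) (v - u) := by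
    intro v
    have hv : v = u + (v - u) := by abel
    have h1 : a v v = a u u + a u (v - u) + a (v - u) u + a (v - u) (v - u) := by
      conv_lhs => rw [hv]
      simp only [map_add, LinearMap.add_apply]
      ring
    have h2 : (ℓ v : ℝ) = ℓ u + ℓ (v - u) := by
      conv_lhs => rw [hv]
      rw [map_add]
    have h3 : a (v - u) u = a u (v - u) := hsymm _ _
    rw [hJ v, hJ u, h1, h2, h3]
    ring
  have expand2 : ∀ v : V, (∀ i, T i v = b i) → J v = J u + (1/2) * a (v - u) (v - u) := by
    intro v hv
    have hT0 : ∀ i, T i (v - u) = 0 := by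
      intro i
      rw [map_sub, hv i, hTu i, sub_self]
    rw [expand v, key (v - u)]
    simp [hT0]
  have hmin : ∀ v : V, (∀ i, T i v = b i) → J u ≤ J v := by
    intro v hv
    rw [expand2 v hv]
    nlinarith [hpos (v - u)]
  refine ⟨hdet, hTu, hmin, ?_⟩
  intro u' hu' hmin'
  have h1 : J u' ≤ J u := hmin' u hTu
  have h2 : J u' = J u + (1/2) * a (u' - u) (u' - u) := expand2 u' hu'
  have h3 : a (u' - u) (u' - u) ≤ 0 := by linarith
  have h4 := hzero _ h3
  exact sub_eq_zero.mp h4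
end

section
/- Let V be a Hilbert space, a(·,·) symmetric continuous coercive, ℓ ∈ V', and T₁,…,T_N ∈ V' linearly independent. Let u be the minimizer of J(v) = ½ a(v,v) − ℓ(v) subject to T_i u = b_i. Then the minimal value satisfies J(u) = ½ (b − Tφ₀)ᵀ A⁻¹ (b − Tφ₀) − ½ a(φ₀, φ₀), where φ₀ solves a(φ₀,·) = ℓ, A = (a(φ_i, φ_j)) is the Gramian of the representers a(φ_i,·) = T_i, and Tφ₀ = (T_i φ₀)_i. -/
/-!
Since `ℓ = a(φ₀, ·)`, completing the square gives `J v = ½ a(v - φ₀, v - φ₀) - ½ a(φ₀, φ₀)`, so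
`w = u - φ₀` minimizes the energy `a(w, w)` under the constraints `Tᵢ w = bᵢ - Tᵢ φ₀`. The first
variation makes `a(w, ·)` vanish on `⋂ ker Tᵢ`, hence `a(w, ·)` lies in the span of the `Tᵢ` and
`w = ∑ λᵢ φᵢ`. The constraints then read `A λ = b - Tφ₀`, and `a(w, w) = λᵀ A λ`, where the Gram
matrix `A` is positive definite because the `φᵢ` inherit the linear independence of the `Tᵢ`.
-/

open Matrix

section BilinForm

variable {V ι : Type*} [AddCommGroup V] [Module ℝ V] [Fintype ι]

theorem half_apply_self_sub_eq_half_apply_sub_sub (a : V →ₗ[ℝ] V →ₗ[ℝ] ℝ)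
    (hsymm : ∀ v w, a v w = a w v) (φ₀ v : V) :
    1 / 2 * a v v - a φ₀ v = 1 / 2 * a (v - φ₀) (v - φ₀) - 1 / 2 * a φ₀ φ₀ := by
  simp only [map_sub, LinearMap.sub_apply, hsymm v φ₀]
  ring

theorem apply_eq_zero_of_forall_apply_self_le (a : V →ₗ[ℝ] V →ₗ[ℝ] ℝ)
    (hsymm : ∀ v w, a v w = a w v) {w z : V}
    (hmin : ∀ t : ℝ, a w w ≤ a (w + t • z) (w + t • z)) : a w z = 0 := by
  have hquad : ∀ t : ℝ, 0 ≤ a z z * (t * t) + 2 * a w z * t + 0 := fun t => by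
    have := hmin t
    simp only [map_add, map_smul, LinearMap.add_apply, LinearMap.smul_apply, smul_eq_mul,
      hsymm z w] at this
    linarith
  have hdiscrim := discrim_le_zero hquad
  rw [discrim] at hdiscrim
  nlinarith [sq_nonneg (a w z)]

theorem injective_of_forall_pos (a : V →ₗ[ℝ] V →ₗ[ℝ] ℝ)
    (hpos : ∀ v, v ≠ 0 → 0 < a v v) : Function.Injective a := by
  refine (injective_iff_map_eq_zero a).mpr fun v hv => ?_
  by_contra hne
  simpa [hv] using hpos v hne

theorem exists_eq_sum_smul_of_iInf_ker_le_ker {a : V →ₗ[ℝ] V →ₗ[ℝ] ℝ}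
    (ha : Function.Injective a) {T : ι → V →ₗ[ℝ] ℝ} {φ : ι → V} (hφ : ∀ i, a (φ i) = T i)
    {w : V} (hw : ⨅ i, LinearMap.ker (T i) ≤ LinearMap.ker (a w)) :
    ∃ c : ι → ℝ, w = ∑ i, c i • φ i := by
  obtain ⟨c, hc⟩ :=
    (Submodule.mem_span_range_iff_exists_fun ℝ).mp (mem_span_of_iInf_ker_le_ker hw)
  exact ⟨c, ha (by simp [map_sum, hφ, hc])⟩

def bilinGram (a : V →ₗ[ℝ] V →ₗ[ℝ] ℝ) (φ : ι → V) : Matrix ι ι ℝ :=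
  Matrix.of fun i j => a (φ i) (φ j)

variable (a : V →ₗ[ℝ] V →ₗ[ℝ] ℝ) (φ : ι → V)

theorem sum_smul_apply (x : ι → ℝ) (v : V) :
    a (∑ i, x i • φ i) v = x ⬝ᵥ fun i => a (φ i) v := by
  simp [map_sum, dotProduct]

theorem bilinGram_mulVec (x : ι → ℝ) :
    bilinGram a φ *ᵥ x = fun i => a (φ i) (∑ j, x j • φ j) := by
  ext i
  simp [bilinGram, mulVec, dotProduct, map_sum, mul_comm]

theorem dotProduct_bilinGram_mulVec (x : ι → ℝ) :
    x ⬝ᵥ bilinGram a φ *ᵥ x = a (∑ i, x i • φ i) (∑ i, x i • φ i) := by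
  rw [bilinGram_mulVec, sum_smul_apply]

theorem posDef_bilinGram (hsymm : ∀ v w, a v w = a w v) (hpos : ∀ v, v ≠ 0 → 0 < a v v)
    (hφ : LinearIndependent ℝ φ) : (bilinGram a φ).PosDef := by
  refine posDef_iff_dotProduct_mulVec.mpr ⟨IsHermitian.ext fun i j => hsymm _ _, fun x hx => ?_⟩
  rw [star_trivial, dotProduct_bilinGram_mulVec]
  refine hpos _ fun h => hx ?_
  exact funext (Fintype.linearIndependent_iff.mp hφ x h)

theorem apply_self_eq_dotProduct_inv_mulVec [DecidableEq ι] (hG : IsUnit (bilinGram a φ))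
    (x : ι → ℝ) :
    a (∑ i, x i • φ i) (∑ i, x i • φ i) =
      (bilinGram a φ *ᵥ x) ⬝ᵥ (bilinGram a φ)⁻¹ *ᵥ (bilinGram a φ *ᵥ x) := by
  rw [mulVec_mulVec, nonsing_inv_mul _ ((isUnit_iff_isUnit_det _).mp hG), one_mulVec,
    dotProduct_comm, dotProduct_bilinGram_mulVec]

end BilinForm

theorem pos_of_coercive {V : Type*} [NormedAddCommGroup V] [Module ℝ V]
    {a : V →ₗ[ℝ] V →ₗ[ℝ] ℝ} {γ : ℝ} (hγ : 0 < γ) (hcoer : ∀ v, γ * ‖v‖ ^ 2 ≤ a v v) :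
    ∀ v, v ≠ 0 → 0 < a v v := fun v hv =>
  lt_of_lt_of_le (by positivity) (hcoer v)

theorem linearIndependent_of_apply_eq {V ι : Type*} [NormedAddCommGroup V] [NormedSpace ℝ V]
    {a : V →ₗ[ℝ] V →ₗ[ℝ] ℝ} {T : ι → V →L[ℝ] ℝ} (hT : LinearIndependent ℝ T) {φ : ι → V}
    (hφ : ∀ i v, a (φ i) v = T i v) : LinearIndependent ℝ φ := by
  have haφ : a ∘ φ = ContinuousLinearMap.coeLM ℝ ∘ T := funext fun i => LinearMap.ext (hφ i)
  refine LinearIndependent.of_comp a ?_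
  rw [haφ]
  exact hT.map' _ (LinearMap.ker_eq_bot.mpr ContinuousLinearMap.coe_injective)

theorem stmt3_general
    {V : Type*} [NormedAddCommGroup V] [InnerProductSpace ℝ V]
    (a : V →ₗ[ℝ] V →ₗ[ℝ] ℝ) (hsymm : ∀ v w, a v w = a w v)
    (γ : ℝ) (hγ : 0 < γ)
    (hcoer : ∀ v, γ * ‖v‖ ^ 2 ≤ a v v)
    (ℓ : V →L[ℝ] ℝ)
    (J : V → ℝ) (hJ : ∀ v, J v = (1 / 2) * a v v - ℓ v)
    {N : ℕ} (T : Fin N → V →L[ℝ] ℝ) (hT : LinearIndependent ℝ T)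
    (b : Fin N → ℝ)
    (φ₀ : V) (hφ₀ : ∀ v, a φ₀ v = ℓ v)
    (φ : Fin N → V) (hφ : ∀ i v, a (φ i) v = T i v)
    (A : Matrix (Fin N) (Fin N) ℝ) (hA : ∀ i j, A i j = a (φ i) (φ j))
    -- u : the minimizer of J subject to the constraints Tᵢ u = bᵢ
    (u : V) (hu_con : ∀ i, T i u = b i)
    (hu_min : ∀ v : V, (∀ i, T i v = b i) → J u ≤ J v) :
    J u = (1 / 2) * ((fun i => b i - T i φ₀) ⬝ᵥ
        A⁻¹.mulVec (fun i => b i - T i φ₀)) - (1 / 2) * a φ₀ φ₀ := by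
  have hpos := pos_of_coercive hγ hcoer
  have hJ' : ∀ v, J v = 1 / 2 * a (v - φ₀) (v - φ₀) - 1 / 2 * a φ₀ φ₀ := fun v => by
    rw [hJ, ← hφ₀, half_apply_self_sub_eq_half_apply_sub_sub a hsymm]
  have hker : ⨅ i, LinearMap.ker (T i : V →ₗ[ℝ] ℝ) ≤ LinearMap.ker (a (u - φ₀)) := by
    intro z hz
    simp only [Submodule.mem_iInf, LinearMap.mem_ker, ContinuousLinearMap.coe_coe] at hz
    refine apply_eq_zero_of_forall_apply_self_le a hsymm fun t => ?_
    have hle := hu_min (u + t • z) fun i => by simp [hz i, hu_con i]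
    rw [hJ', hJ', add_sub_right_comm] at hle
    linarith
  obtain ⟨x, hx⟩ := exists_eq_sum_smul_of_iInf_ker_le_ker (injective_of_forall_pos a hpos)
    (fun i => LinearMap.ext (hφ i)) hker
  have hGx : bilinGram a φ *ᵥ x = fun i => b i - T i φ₀ := by
    rw [bilinGram_mulVec, ← hx]
    ext i
    simp only [hφ, map_sub, hu_con]
  have hG := (posDef_bilinGram a φ hsymm hpos (linearIndependent_of_apply_eq hT hφ)).isUnit
  have hAG : A = bilinGram a φ := Matrix.ext hA
  rw [hJ' u, hAG, ← hGx, ← apply_self_eq_dotProduct_inv_mulVec a φ hG, ← hx]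

/-- the minimal value of the finite dimensionally constrained problem is
`J(u) = ½ (b − Tφ₀)ᵀ A⁻¹ (b − Tφ₀) − ½ a(φ₀,φ₀)`. -/
theorem stmt3
    {V : Type*} [NormedAddCommGroup V] [InnerProductSpace ℝ V] [CompleteSpace V]
    (a : V →ₗ[ℝ] V →ₗ[ℝ] ℝ) (hsymm : ∀ v w, a v w = a w v)
    (γ Γ : ℝ) (hγ : 0 < γ) (hΓ : 0 < Γ)
    (hcoer : ∀ v, γ * ‖v‖ ^ 2 ≤ a v v)
    (hbound : ∀ v w, a v w ≤ Γ * ‖v‖ * ‖w‖)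
    (ℓ : V →L[ℝ] ℝ)
    (J : V → ℝ) (hJ : ∀ v, J v = (1 / 2) * a v v - ℓ v)
    {N : ℕ} (T : Fin N → V →L[ℝ] ℝ) (hT : LinearIndependent ℝ T)
    (b : Fin N → ℝ)
    (φ₀ : V) (hφ₀ : ∀ v, a φ₀ v = ℓ v)
    (φ : Fin N → V) (hφ : ∀ i v, a (φ i) v = T i v)
    (A : Matrix (Fin N) (Fin N) ℝ) (hA : ∀ i j, A i j = a (φ i) (φ j))
    -- u : the minimizer of J subject to the constraints Tᵢ u = bᵢ
    (u : V) (hu_con : ∀ i, T i u = b i)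
    (hu_min : ∀ v : V, (∀ i, T i v = b i) → J u ≤ J v) :
    J u = (1 / 2) * ((fun i => b i - T i φ₀) ⬝ᵥ
        A⁻¹.mulVec (fun i => b i - T i φ₀)) - (1 / 2) * a φ₀ φ₀ :=
  stmt3_general a hsymm γ hγ hcoer ℓ J hJ T hT b φ₀ hφ₀ φ hφ A hA u hu_con hu_min
end

section
/- Let V be a Hilbert space, J(v) = ½ a(v,v) − ℓ(v) with a symmetric, continuous, coercive and ℓ ∈ V'. Let M be a compact metric space, X a Hilbert space, X₀ ⊂ X a closed subspace with orthogonal projection P (ker P = X₀), T : M → L(V,X) continuous, b ∈ X, and 𝒱 : M → ℝ ∪ {∞} lower semicontinuous. Set V_{b,y} = {v ∈ V : P(T(y)v − b) = 0}. If there exists x₀ ∈ M with 𝒱(x₀) < ∞ and V_{b,x₀} ≠ ∅, then there exists (u,x) with u ∈ V_{b,x} minimizing J(u) + 𝒱(x) over the admissible set W = {(v,y) : v ∈ V_{b,y}}. -/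
/-!
The reduced cost `m y = inf {J v | P (T y v - b) = 0}` is lower semicontinuous, so `m + 𝒱` attains
its minimum on the compact space `M` at some `x`, and the strongly convex `J` attains `m x` on the
closed affine constraint set at `x`.

Lower semicontinuity of `m` is where strong convexity enters. If `y → x` and `v` nearly minimizes
`J` under the constraint at `y`, then `v` is bounded and nearly satisfies the constraint at `x`. The
sets of such approximate solutions are nested, closed and convex, and by the midpoint inequality
`γ/8 ‖u - w‖² ≤ (J u + J w)/2 - J ((u + w)/2)` near-minimizers of `J` on them form a Cauchy
sequence, whose limit satisfies the constraint at `x` exactly.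
-/

open Set Filter Topology
open scoped RealInnerProductSpace

section StrongConvex

variable {E : Type*} [NormedAddCommGroup E] [NormedSpace ℝ E] {s : Set E} {m : ℝ} {f : E → ℝ}

lemma StrongConvexOn.apply_midpoint_le (hf : StrongConvexOn s m f) {x y : E} (hx : x ∈ s)
    (hy : y ∈ s) :
    f ((2⁻¹ : ℝ) • x + (2⁻¹ : ℝ) • y) ≤ (f x + f y) / 2 - m / 8 * ‖x - y‖ ^ 2 := by
  have h := hf.2 hx hy (by norm_num : (0 : ℝ) ≤ 2⁻¹) (by norm_num : (0 : ℝ) ≤ 2⁻¹) (by norm_num)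
  simp only [smul_eq_mul] at h
  linarith

lemma StrongConvexOn.convexOn (hf : StrongConvexOn s m f) (hm : 0 ≤ m) : ConvexOn ℝ s f :=
  UniformConvexOn.convexOn hf fun r => by positivity

lemma StrongConvexOn.subset {t : Set E} (hf : StrongConvexOn t m f) (hst : s ⊆ t)
    (hs : Convex ℝ s) : StrongConvexOn s m f :=
  ⟨hs, fun _ hx _ hy => hf.2 (hst hx) (hst hy)⟩

lemma StrongConvexOn.exists_norm_le_of_le (hf : StrongConvexOn univ m f) (hm : 0 < m)
    (hbelow : BddBelow (range f)) (r : ℝ) : ∃ R, ∀ v, f v ≤ r → ‖v‖ ≤ R := by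
  obtain ⟨β, hβ⟩ := hbelow
  refine ⟨√(8 / m * ((r + f 0) / 2 - β)), fun v hv => Real.le_sqrt_of_sq_le ?_⟩
  have hmid := hf.apply_midpoint_le (mem_univ v) (mem_univ 0)
  have hβmid := hβ (mem_range_self ((2⁻¹ : ℝ) • v + (2⁻¹ : ℝ) • (0 : E)))
  rw [sub_zero] at hmid
  rw [div_mul_eq_mul_div, le_div_iff₀ hm]
  linarith

lemma StrongConvexOn.cauchySeq_of_tendsto {t : ℕ → Set E} (ht : Antitone t)
    (htconv : ∀ n, Convex ℝ (t n)) (hf : StrongConvexOn s m f) (hm : 0 < m) (hts : t 0 ⊆ s)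
    {μ : ℕ → ℝ} (hμ : ∀ n, ∀ v ∈ t n, μ n ≤ f v) {L : ℝ} (hμL : Tendsto μ atTop (𝓝 L))
    {u : ℕ → E} (hu : ∀ n, u n ∈ t n) (hfu : Tendsto (fun n => f (u n)) atTop (𝓝 L)) : CauchySeq u := by
  rw [cauchySeq_iff_tendsto_dist_atTop_0, ← prod_atTop_atTop_eq]
  set gap : ℕ × ℕ → ℝ := fun p => (f (u p.1) + f (u p.2)) / 2 - μ (min p.1 p.2)
  have hmem : ∀ p : ℕ × ℕ, u p.1 ∈ t (min p.1 p.2) ∧ u p.2 ∈ t (min p.1 p.2) := fun p =>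
    ⟨ht (min_le_left _ _) (hu _), ht (min_le_right _ _) (hu _)⟩
  have hdist : ∀ p : ℕ × ℕ, dist (u p.1) (u p.2) ≤ √(8 / m * gap p) := by
    intro p
    obtain ⟨h₁, h₂⟩ := hmem p
    have hmid := hμ _ _ ((htconv _) h₁ h₂ (by norm_num : (0 : ℝ) ≤ 2⁻¹)
      (by norm_num : (0 : ℝ) ≤ 2⁻¹) (by norm_num))
    have hle := hf.apply_midpoint_le (hts (ht (Nat.zero_le _) h₁)) (hts (ht (Nat.zero_le _) h₂))
    rw [dist_eq_norm]
    refine Real.le_sqrt_of_sq_le ?_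
    rw [div_mul_eq_mul_div, le_div_iff₀ hm]
    simp only [gap]
    linarith
  have hmin : Tendsto (fun p : ℕ × ℕ => min p.1 p.2) (atTop ×ˢ atTop) atTop :=
    tendsto_atTop.2 fun N => ((tendsto_fst.eventually (eventually_ge_atTop N)).and
      (tendsto_snd.eventually (eventually_ge_atTop N))).mono fun _ hp => le_min hp.1 hp.2
  have hgap : Tendsto gap (atTop ×ˢ atTop) (𝓝 0) := by
    have := ((hfu.comp tendsto_fst).add (hfu.comp tendsto_snd)).div_const 2 |>.sub
      (hμL.comp hmin)
    simpa [gap] using this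
  have hsqrt : Tendsto (fun p => √(8 / m * gap p)) (atTop ×ˢ atTop) (𝓝 0) := by
    simpa using ((hgap.const_mul (8 / m)).sqrt)
  exact squeeze_zero (fun _ => dist_nonneg) hdist hsqrt

lemma StrongConvexOn.nonempty_iInter [CompleteSpace E] {t : ℕ → Set E} (ht : Antitone t)
    (htne : ∀ n, (t n).Nonempty) (htclosed : ∀ n, IsClosed (t n))
    (htconv : ∀ n, Convex ℝ (t n)) (hf : StrongConvexOn s m f) (hm : 0 < m) (hts : t 0 ⊆ s)
    (hbelow : BddBelow (f '' t 0)) (habove : BddAbove (f '' t 0)) : (⋂ n, t n).Nonempty := by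
  set μ : ℕ → ℝ := fun n => sInf (f '' t n)
  have hbelow_n : ∀ n, BddBelow (f '' t n) := fun n =>
    hbelow.mono (image_mono (ht (Nat.zero_le n)))
  have hμ : ∀ n, ∀ v ∈ t n, μ n ≤ f v := fun n v hv =>
    csInf_le (hbelow_n n) (mem_image_of_mem f hv)
  have hμ_mono : Monotone μ := fun n k hnk =>
    csInf_le_csInf (hbelow_n n) ((htne k).image f) (image_mono (ht hnk))
  have hμ_bdd : BddAbove (range μ) := by
    obtain ⟨C, hC⟩ := habove
    refine ⟨C, forall_mem_range.2 fun n => ?_⟩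
    obtain ⟨v, hv⟩ := htne n
    exact (hμ n v hv).trans (hC (mem_image_of_mem f (ht (Nat.zero_le n) hv)))
  have hμL := tendsto_atTop_ciSup hμ_mono hμ_bdd
  have hnear : ∀ n : ℕ, ∃ u ∈ t n, f u < μ n + 1 / (n + 1) := fun n => by
    obtain ⟨_, ⟨u, hu, rfl⟩, hlt⟩ :=
      exists_lt_of_csInf_lt ((htne n).image f) (lt_add_of_pos_right (μ n) Nat.one_div_pos_of_nat)
    exact ⟨u, hu, hlt⟩
  choose u hu hfu using hnear
  have hfuL : Tendsto (fun n => f (u n)) atTop (𝓝 (⨆ n, μ n)) := by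
    refine tendsto_of_tendsto_of_tendsto_of_le_of_le hμL ?_ (fun n => hμ n _ (hu n))
      (fun n => (hfu n).le)
    simpa using hμL.add tendsto_one_div_add_atTop_nhds_zero_nat
  obtain ⟨z, hz⟩ := cauchySeq_tendsto_of_complete
    (hf.cauchySeq_of_tendsto ht htconv hm hts hμ hμL hu hfuL)
  exact ⟨z, mem_iInter.2 fun n => (htclosed n).mem_of_tendsto hz
    (eventually_atTop.2 ⟨n, fun k hk => ht hk (hu k)⟩)⟩

lemma StrongConvexOn.exists_isMinOn [CompleteSpace E] (hs : s.Nonempty) (hsclosed : IsClosed s)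
    (hf : StrongConvexOn s m f) (hm : 0 < m) (hfc : ContinuousOn f s)
    (hbelow : BddBelow (f '' s)) : ∃ u ∈ s, IsMinOn f s u := by
  set I := sInf (f '' s)
  set t : ℕ → Set E := fun n => s ∩ f ⁻¹' Iic (I + 1 / (n + 1))
  have ht : Antitone t := fun n k hnk =>
    inter_subset_inter_right _ (preimage_mono (Iic_subset_Iic.2 (by gcongr)))
  have htne : ∀ n, (t n).Nonempty := fun n => by
    obtain ⟨_, ⟨u, hu, rfl⟩, hlt⟩ :=
      exists_lt_of_csInf_lt (hs.image f) (lt_add_of_pos_right I Nat.one_div_pos_of_nat)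
    exact ⟨u, hu, hlt.le⟩
  have htclosed : ∀ n, IsClosed (t n) := fun n =>
    hfc.preimage_isClosed_of_isClosed hsclosed isClosed_Iic
  have htconv : ∀ n, Convex ℝ (t n) := fun n => (hf.convexOn hm.le).convex_le _
  obtain ⟨z, hz⟩ := hf.nonempty_iInter ht htne htclosed htconv hm inter_subset_left
    (hbelow.mono (image_mono inter_subset_left)) ⟨I + 1, by
      rintro _ ⟨v, ⟨-, hv⟩, rfl⟩
      simpa using hv⟩
  have hzt := mem_iInter.1 hz
  refine ⟨z, (hzt 0).1, fun v hv => ?_⟩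
  have hI : Tendsto (fun n : ℕ => I + 1 / (n + 1)) atTop (𝓝 I) := by
    simpa using tendsto_one_div_add_atTop_nhds_zero_nat.const_add I
  have hzI : f z ≤ I := ge_of_tendsto hI (Eventually.of_forall fun n => (hzt n).2)
  exact hzI.trans (csInf_le hbelow (mem_image_of_mem f hv) :)

end StrongConvex

section QuadraticEnergy

variable {E : Type*} [NormedAddCommGroup E] [NormedSpace ℝ E]

noncomputable def quadraticEnergy (a : E →ₗ[ℝ] E →ₗ[ℝ] ℝ) (ℓ : E →L[ℝ] ℝ) (v : E) : ℝ :=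
  1 / 2 * a v v - ℓ v

variable {a : E →ₗ[ℝ] E →ₗ[ℝ] ℝ} {γ : ℝ}

lemma strongConvexOn_quadraticEnergy (hcoer : ∀ v, γ * ‖v‖ ^ 2 ≤ a v v) (ℓ : E →L[ℝ] ℝ) :
    StrongConvexOn univ γ (quadraticEnergy a ℓ) := by
  refine ⟨convex_univ, fun x _ y _ s t hs ht hst => ?_⟩
  obtain rfl : t = 1 - s := by linarith
  have hdiff := mul_le_mul_of_nonneg_left (hcoer (x - y)) (mul_nonneg hs ht)
  simp only [quadraticEnergy, map_add, map_sub, map_smul, LinearMap.add_apply,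
    LinearMap.sub_apply, LinearMap.smul_apply, smul_eq_mul] at hdiff ⊢
  linarith

lemma continuous_quadraticEnergy {Γ : ℝ} (hbound : ∀ v w, a v w ≤ Γ * ‖v‖ * ‖w‖)
    (ℓ : E →L[ℝ] ℝ) : Continuous (quadraticEnergy a ℓ) := by
  have hnorm : ∀ v w, ‖a v w‖ ≤ Γ * ‖v‖ * ‖w‖ := fun v w => by
    refine abs_le.2 ⟨?_, hbound v w⟩
    have := hbound (-v) w
    simp only [map_neg, LinearMap.neg_apply, norm_neg] at this
    linarith
  let B := a.mkContinuous₂ Γ hnorm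
  exact (continuous_const.mul (B.continuous₂.comp (continuous_id.prodMk continuous_id))).sub
    ℓ.continuous

lemma bddBelow_range_quadraticEnergy (hγ : 0 < γ) (hcoer : ∀ v, γ * ‖v‖ ^ 2 ≤ a v v)
    (ℓ : E →L[ℝ] ℝ) : BddBelow (range (quadraticEnergy a ℓ)) := by
  refine ⟨-‖ℓ‖ ^ 2 / (2 * γ), forall_mem_range.2 fun v => ?_⟩
  have hℓ : ℓ v ≤ ‖ℓ‖ * ‖v‖ := (le_abs_self _).trans (ℓ.le_opNorm v)
  rw [div_le_iff₀ (by positivity)]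
  simp only [quadraticEnergy]
  nlinarith [hcoer v, sq_nonneg (γ * ‖v‖ - ‖ℓ‖)]

end QuadraticEnergy

section ConstrainedInf

variable {E M F : Type*} [NormedAddCommGroup E] [NormedSpace ℝ E] [NormedAddCommGroup F]
  [NormedSpace ℝ F] {m : ℝ} {f : E → ℝ}

noncomputable def constrainedInf (f : E → ℝ) (A : M → E →L[ℝ] F) (c : F) (y : M) : EReal :=
  ⨅ (v : E) (_ : A y v = c), (f v : EReal)

variable {A : M → E →L[ℝ] F} {c : F} {y : M}

lemma le_constrainedInf {r : ℝ} (h : ∀ v, A y v = c → r ≤ f v) :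
    (r : EReal) ≤ constrainedInf f A c y :=
  le_iInf₂ fun v hv => EReal.coe_le_coe_iff.2 (h v hv)

lemma constrainedInf_le {v : E} (hv : A y v = c) : constrainedInf f A c y ≤ f v :=
  iInf₂_le v hv

lemma exists_of_constrainedInf_lt {r : EReal} (h : constrainedInf f A c y < r) :
    ∃ v, A y v = c ∧ (f v : EReal) < r := by
  simpa [constrainedInf, iInf_lt_iff] using h

lemma lowerSemicontinuous_constrainedInf [TopologicalSpace M] [CompleteSpace E]
    (hA : Continuous A) (c : F) (hf : StrongConvexOn univ m f) (hm : 0 < m) (hfc : Continuous f)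
    (hbelow : BddBelow (range f)) : LowerSemicontinuous (constrainedInf f A c) := by
  intro x r hr
  by_contra hfreq
  rw [not_eventually] at hfreq
  obtain ⟨ρ, hrρ, hρx⟩ := EReal.exists_between_coe_real hr
  obtain ⟨R, hR⟩ := hf.exists_norm_le_of_le hm hbelow ρ
  set t : ℕ → Set E := fun n => A x ⁻¹' Metric.closedBall c (1 / (n + 1)) ∩ f ⁻¹' Iic ρ
  have ht : Antitone t := fun n k hnk =>
    inter_subset_inter_left _ (preimage_mono (Metric.closedBall_subset_closedBall (by gcongr)))
  have htne : ∀ n, (t n).Nonempty := by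
    intro n
    have hnear : ∀ᶠ y in 𝓝 x, ‖A y - A x‖ * R < 1 / (n + 1) := by
      have : Tendsto (fun y => ‖A y - A x‖ * R) (𝓝 x) (𝓝 0) := by
        simpa using ((hA.tendsto x).sub_const (A x)).norm.mul_const R
      exact this.eventually (gt_mem_nhds Nat.one_div_pos_of_nat)
    obtain ⟨y, hy, hyx⟩ := (hfreq.and_eventually hnear).exists
    obtain ⟨v, hv, hfv⟩ := exists_of_constrainedInf_lt ((not_lt.1 hy).trans_lt hrρ)
    have hfv' : f v ≤ ρ := (EReal.coe_lt_coe_iff.1 hfv).le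
    refine ⟨v, ?_, hfv'⟩
    calc dist (A x v) c = ‖(A y - A x) v‖ := by
          rw [dist_eq_norm, sub_apply, hv, norm_sub_rev]
      _ ≤ ‖A y - A x‖ * ‖v‖ := (A y - A x).le_opNorm v
      _ ≤ ‖A y - A x‖ * R := by gcongr; exact hR v hfv'
      _ ≤ 1 / (n + 1) := hyx.le
  have htclosed : ∀ n, IsClosed (t n) := fun n =>
    (Metric.isClosed_closedBall.preimage (A x).continuous).inter (isClosed_Iic.preimage hfc)
  have htconv : ∀ n, Convex ℝ (t n) := fun n =>
    ((convex_closedBall c _).linear_preimage (A x).toLinearMap).inter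
      (show Convex ℝ {v | f v ≤ ρ} by simpa using (hf.convexOn hm.le).convex_le ρ)
  obtain ⟨z, hz⟩ := hf.nonempty_iInter ht htne htclosed htconv hm (subset_univ _)
    (hbelow.mono (image_subset_range f _)) ⟨ρ, by rintro _ ⟨v, ⟨-, hv⟩, rfl⟩; exact hv⟩
  have hzt := mem_iInter.1 hz
  have hAz : A x z = c := by
    refine eq_of_forall_dist_le fun ε hε => ?_
    obtain ⟨n, hn⟩ := exists_nat_one_div_lt hε
    exact ((hzt n).1 : dist (A x z) c ≤ _).trans hn.le
  exact (constrainedInf_le hAz).trans (EReal.coe_le_coe_iff.2 (hzt 0).2) |>.not_gt hρx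

lemma exists_apply_eq_le_constrainedInf [CompleteSpace E] (hf : StrongConvexOn univ m f)
    (hm : 0 < m) (hfc : Continuous f) (hbelow : BddBelow (range f))
    (h : constrainedInf f A c y < ⊤) : ∃ u, A y u = c ∧ (f u : EReal) ≤ constrainedInf f A c y := by
  obtain ⟨w, hw, -⟩ := exists_of_constrainedInf_lt h
  have hconv : Convex ℝ {v | A y v = c} := (convex_singleton c).linear_preimage (A y).toLinearMap
  obtain ⟨u, hu, humin⟩ := (hf.subset (subset_univ _) hconv).exists_isMinOn ⟨w, hw⟩
    (isClosed_eq (A y).continuous continuous_const) hm hfc.continuousOn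
    (hbelow.mono (image_subset_range _ _))
  exact ⟨u, hu, le_constrainedInf fun v hv => humin hv⟩

theorem exists_forall_constrainedInf_add_le [TopologicalSpace M] [CompactSpace M]
    [CompleteSpace E] (hA : Continuous A) (c : F) (hf : StrongConvexOn univ m f) (hm : 0 < m)
    (hfc : Continuous f) (hbelow : BddBelow (range f)) {𝒱 : M → EReal}
    (h𝒱 : LowerSemicontinuous 𝒱) (h𝒱bot : ∀ y, 𝒱 y ≠ ⊥) {x₀ : M} {v₀ : E} (hv₀ : A x₀ v₀ = c)
    (hx₀ : 𝒱 x₀ < ⊤) :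
    ∃ u x, A x u = c ∧ ∀ v y, A y v = c → (f u : EReal) + 𝒱 x ≤ f v + 𝒱 y := by
  obtain ⟨β, hβ⟩ := hbelow
  set cost := constrainedInf f A c
  have hcost_bot : ∀ y, cost y ≠ ⊥ := fun y =>
    ne_bot_of_le_ne_bot (EReal.coe_ne_bot β) (le_constrainedInf fun v _ => hβ (mem_range_self v))
  have hlsc : LowerSemicontinuous fun y => cost y + 𝒱 y :=
    (lowerSemicontinuous_constrainedInf hA c hf hm hfc ⟨β, hβ⟩).add' h𝒱
      fun y => EReal.continuousAt_add (Or.inr (h𝒱bot y)) (Or.inl (hcost_bot y))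
  obtain ⟨x, -, hx⟩ :=
    (hlsc.lowerSemicontinuousOn univ).exists_isMinOn ⟨x₀, mem_univ _⟩ isCompact_univ
  have hcost_x : cost x < ⊤ := by
    refine lt_top_iff_ne_top.2 fun htop => ?_
    have hxx₀ : cost x + 𝒱 x ≤ cost x₀ + 𝒱 x₀ := hx (mem_univ x₀)
    rw [htop, EReal.top_add_of_ne_bot (h𝒱bot x)] at hxx₀
    exact (hxx₀.trans_lt (EReal.add_lt_top
      ((constrainedInf_le hv₀).trans_lt (EReal.coe_lt_top _)).ne hx₀.ne)).ne rfl
  obtain ⟨u, hu, hu_le⟩ := exists_apply_eq_le_constrainedInf hf hm hfc ⟨β, hβ⟩ hcost_x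
  refine ⟨u, x, hu, fun v y hv => ?_⟩
  calc (f u : EReal) + 𝒱 x ≤ cost x + 𝒱 x := by gcongr
    _ ≤ cost y + 𝒱 y := hx (mem_univ y)
    _ ≤ f v + 𝒱 y := by gcongr; exact constrainedInf_le hv

end ConstrainedInf

theorem stmt5_general
    {V : Type*} [NormedAddCommGroup V] [InnerProductSpace ℝ V] [CompleteSpace V]
    {X : Type*} [NormedAddCommGroup X] [InnerProductSpace ℝ X]
    {M : Type*} [MetricSpace M] [CompactSpace M]
    (a : V →ₗ[ℝ] V →ₗ[ℝ] ℝ)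
    (γ Γ : ℝ) (hγ : 0 < γ)
    (hcoer : ∀ v, γ * ‖v‖ ^ 2 ≤ a v v)
    (hbound : ∀ v w, a v w ≤ Γ * ‖v‖ * ‖w‖)
    (ℓ : V →L[ℝ] ℝ)
    (J : V → ℝ) (hJ : ∀ v, J v = (1 / 2) * a v v - ℓ v)
    (P : X →L[ℝ] X)
    (T : M → V →L[ℝ] X) (hTcont : Continuous T) (b : X)
    (𝒱 : M → EReal) (h𝒱 : LowerSemicontinuous 𝒱) (h𝒱bot : ∀ y, 𝒱 y ≠ ⊥)
    (x₀ : M) (hx₀fin : 𝒱 x₀ < ⊤) (hx₀feas : ∃ v : V, P (T x₀ v - b) = 0) :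
    ∃ (u : V) (x : M), P (T x u - b) = 0 ∧
      ∀ (v : V) (y : M), P (T y v - b) = 0 →
        ((J u : ℝ) : EReal) + 𝒱 x ≤ ((J v : ℝ) : EReal) + 𝒱 y := by
  obtain rfl : J = quadraticEnergy a ℓ := funext hJ
  have hfeas : ∀ y v, P (T y v - b) = 0 ↔ P.comp (T y) v = P b := fun y v => by
    simp [sub_eq_zero]
  simp only [hfeas]
  obtain ⟨v₀, hv₀⟩ := hx₀feas
  exact exists_forall_constrainedInf_add_le (continuous_const.clm_comp hTcont) (P b)
    (strongConvexOn_quadraticEnergy hcoer ℓ) hγ (continuous_quadraticEnergy hbound ℓ)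
    (bddBelow_range_quadraticEnergy hγ hcoer ℓ) h𝒱 h𝒱bot ((hfeas x₀ v₀).1 hv₀) hx₀fin

/-- existence of a global minimizer of `J(u) + 𝒱(x)` over the admissible
set `W = {(v,y) : P(T(y)v − b) = 0}`, for a compact metric space `M`, a continuous map
`T : M → L(V,X)`, the orthogonal projection `P` with kernel `X₀`, a lower
semicontinuous `𝒱`, assuming that the feasible set is nonempty for some `x₀` with
`𝒱(x₀) < ∞`. -/
theorem stmt5
    {V : Type*} [NormedAddCommGroup V] [InnerProductSpace ℝ V] [CompleteSpace V]
    {X : Type*} [NormedAddCommGroup X] [InnerProductSpace ℝ X] [CompleteSpace X]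
    {M : Type*} [MetricSpace M] [CompactSpace M]
    (a : V →ₗ[ℝ] V →ₗ[ℝ] ℝ) (hsymm : ∀ v w, a v w = a w v)
    (γ Γ : ℝ) (hγ : 0 < γ) (hΓ : 0 < Γ)
    (hcoer : ∀ v, γ * ‖v‖ ^ 2 ≤ a v v)
    (hbound : ∀ v w, a v w ≤ Γ * ‖v‖ * ‖w‖)
    (ℓ : V →L[ℝ] ℝ)
    (J : V → ℝ) (hJ : ∀ v, J v = (1 / 2) * a v v - ℓ v)
    (X₀ : Submodule ℝ X) (hX₀closed : IsClosed (X₀ : Set X))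
    (P : X →L[ℝ] X) (hPidem : ∀ x, P (P x) = P x)
    (hPsym : ∀ x y, ⟪P x, y⟫ = ⟪x, P y⟫)
    (hPker : ∀ x, P x = 0 ↔ x ∈ X₀)
    (T : M → V →L[ℝ] X) (hTcont : Continuous T) (b : X)
    (𝒱 : M → EReal) (h𝒱 : LowerSemicontinuous 𝒱) (h𝒱bot : ∀ y, 𝒱 y ≠ ⊥)
    (x₀ : M) (hx₀fin : 𝒱 x₀ < ⊤) (hx₀feas : ∃ v : V, P (T x₀ v - b) = 0) :
    ∃ (u : V) (x : M), P (T x u - b) = 0 ∧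
      ∀ (v : V) (y : M), P (T y v - b) = 0 →
        ((J u : ℝ) : EReal) + 𝒱 x ≤ ((J v : ℝ) : EReal) + 𝒱 y :=
  stmt5_general a γ Γ hγ hcoer hbound ℓ J hJ P T hTcont b 𝒱 h𝒱 h𝒱bot x₀ hx₀fin hx₀feas
end

section
/- Let Ω ⊂ ℝ² be a bounded convex domain, V one of H₀²(Ω), H²(Ω) ∩ H₀¹(Ω), or the zero-mean periodic space H²_{p,0}(Ω), and J the energy J(v) = ∫_Ω ½κ(Δv)² + ½σ|∇v|² dx with κ > 0, σ ≥ 0. Suppose all prescribed values α₁,…,α_N ∈ ℝ have the same sign with 0 ≤ |α₁| ≤ … ≤ |α_N|. Then (u, X) ∈ V × (closure of Ω)ᴺ minimizes J over all pairs (v, Y) with v(Y_i) = α_i for all i, if and only if (u, X_N) minimizes J over pairs (v, Y_N) with v(Y_N) = α_N (the single-point problem with value α_N), and u(X_i) = α_i for i < N. -/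
/-- point value constraints with prescribed values of the same sign.
`(u,X)` minimizes the membrane energy `J(v) = ½ a(v,v)` subject to the point value
constraints `v(Yᵢ) = αᵢ` (with `Yᵢ` in the closure of the bounded convex `Ω`) if and
only if `(u, X_N)` solves the single-point problem with value `α_N` and
`u(Xᵢ) = αᵢ` for the remaining indices.
The space `V ⊂ H²(Ω)` is modelled abstractly: `ev` realizes elements of `V` as
functions continuous on the closure of `Ω`; `a` is the (symmetric, continuous,
coercive) bilinear form `a(v,w) = ∫_Ω κΔvΔw + σ∇v·∇w dx` of the energy; `hzero`
records that, by the boundary conditions, every `v ∈ V` vanishes somewhere on the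
closure of `Ω`. -/
theorem stmt9
    (Ω : Set (EuclideanSpace ℝ (Fin 2)))
    (hΩopen : IsOpen Ω) (hΩbdd : Bornology.IsBounded Ω)
    (hΩconv : Convex ℝ Ω) (hΩne : Ω.Nonempty)
    {V : Type*} [NormedAddCommGroup V] [InnerProductSpace ℝ V] [CompleteSpace V]
    (ev : V →ₗ[ℝ] (EuclideanSpace ℝ (Fin 2) → ℝ))
    (hev_cont : ∀ v : V, ContinuousOn (ev v) (closure Ω))
    (hev_bdd : ∃ C : ℝ, ∀ (v : V), ∀ x ∈ closure Ω, |ev v x| ≤ C * ‖v‖)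
    (hzero : ∀ v : V, ∃ x ∈ closure Ω, ev v x = 0)
    (a : V →ₗ[ℝ] V →ₗ[ℝ] ℝ) (hsymm : ∀ v w, a v w = a w v)
    (γ Γ : ℝ) (hγ : 0 < γ) (hΓ : 0 < Γ)
    (hcoer : ∀ v, γ * ‖v‖ ^ 2 ≤ a v v)
    (hbound : ∀ v w, a v w ≤ Γ * ‖v‖ * ‖w‖)
    {N : ℕ} (α : Fin (N + 1) → ℝ)
    (hsign : (∀ i, 0 ≤ α i) ∨ (∀ i, α i ≤ 0))
    (hmono : ∀ i j : Fin (N + 1), i ≤ j → |α i| ≤ |α j|)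
    (u : V) (X : Fin (N + 1) → EuclideanSpace ℝ (Fin 2)) :
    ((∀ i, X i ∈ closure Ω) ∧ (∀ i, ev u (X i) = α i) ∧
        (∀ (v : V) (Y : Fin (N + 1) → EuclideanSpace ℝ (Fin 2)),
          (∀ i, Y i ∈ closure Ω) → (∀ i, ev v (Y i) = α i) →
            (1 / 2) * a u u ≤ (1 / 2) * a v v)) ↔
      ((∀ i, X i ∈ closure Ω) ∧ (∀ i, ev u (X i) = α i) ∧
        (∀ (v : V) (y : EuclideanSpace ℝ (Fin 2)),
          y ∈ closure Ω → ev v y = α (Fin.last N) →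
            (1 / 2) * a u u ≤ (1 / 2) * a v v)) := by
  constructor
  · rintro ⟨hX, hU, hmin⟩
    refine ⟨hX, hU, ?_⟩
    intro v y hy hvy
    obtain ⟨x₀, hx₀, hvx₀⟩ := hzero v
    have hpre : IsPreconnected (closure Ω) := hΩconv.closure.isPreconnected
    have hcont := hev_cont v
    have key : ∀ i : Fin (N + 1), ∃ z ∈ closure Ω, ev v z = α i := by
      intro i
      have hle : |α i| ≤ |α (Fin.last N)| := hmono i (Fin.last N) (Fin.le_last i)
      rcases hsign with hpos | hneg
      · have hmem : α i ∈ Set.Icc (ev v x₀) (ev v y) := by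
          rw [hvx₀, hvy]
          refine ⟨hpos i, ?_⟩
          have h1 := abs_of_nonneg (hpos i)
          have h2 := abs_of_nonneg (hpos (Fin.last N))
          linarith
        obtain ⟨z, hz, hvz⟩ := hpre.intermediate_value hx₀ hy hcont hmem
        exact ⟨z, hz, hvz⟩
      · have hmem : α i ∈ Set.Icc (ev v y) (ev v x₀) := by
          rw [hvx₀, hvy]
          refine ⟨?_, hneg i⟩
          have h1 := abs_of_nonpos (hneg i)
          have h2 := abs_of_nonpos (hneg (Fin.last N))
          linarith
        obtain ⟨z, hz, hvz⟩ := hpre.intermediate_value hy hx₀ hcont hmem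
        exact ⟨z, hz, hvz⟩
    choose Y hY1 hY2 using key
    exact hmin v Y hY1 hY2
  · rintro ⟨hX, hU, hmin⟩
    exact ⟨hX, hU, fun v Y hY hvY => hmin v (Y (Fin.last N)) (hY _) (hvY _)⟩
end

section
/- Let Ω ⊂ ℝ² be bounded convex, V ∈ {H₀²(Ω), H²(Ω)∩H₀¹(Ω), H²_{p,0}(Ω)}, J(v) = ∫_Ω ½κ(Δv)² + ½σ|∇v|² dx with κ > 0, σ ≥ 0, and α₁ ≤ … ≤ α_N real numbers. Then (u, X) minimizes J over pairs with v(Y_i) = α_i for all i, if and only if (u, (X₁, X_N)) minimizes J subject to the two constraints v(Y₁) = α₁ and v(Y₂) = α_N (with Y₁, Y₂ ∈ closure of Ω), and u(X_i) = α_i for 1 < i < N. -/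
/-- point value constraints with general (ordered) prescribed values.
`(u,X)` minimizes `J(v) = ½ a(v,v)` subject to `v(Yᵢ) = αᵢ` for all `i` if and only
if `(u,(X₁,X_N))` minimizes `J` subject to the two extreme constraints
`v(Y₁) = α₁`, `v(Y₂) = α_N`, and `u(Xᵢ) = αᵢ` for the intermediate indices.
`V ⊂ H²(Ω)` is modelled abstractly as in the point-value setting: `ev` realizes
elements of `V` as functions continuous on the closure of the bounded convex `Ω`,
and `a` is the symmetric continuous coercive membrane form. -/
theorem stmt10
    (Ω : Set (EuclideanSpace ℝ (Fin 2)))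
    (hΩopen : IsOpen Ω) (hΩbdd : Bornology.IsBounded Ω)
    (hΩconv : Convex ℝ Ω) (hΩne : Ω.Nonempty)
    {V : Type*} [NormedAddCommGroup V] [InnerProductSpace ℝ V] [CompleteSpace V]
    (ev : V →ₗ[ℝ] (EuclideanSpace ℝ (Fin 2) → ℝ))
    (hev_cont : ∀ v : V, ContinuousOn (ev v) (closure Ω))
    (hev_bdd : ∃ C : ℝ, ∀ (v : V), ∀ x ∈ closure Ω, |ev v x| ≤ C * ‖v‖)
    (a : V →ₗ[ℝ] V →ₗ[ℝ] ℝ) (hsymm : ∀ v w, a v w = a w v)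
    (γ Γ : ℝ) (hγ : 0 < γ) (hΓ : 0 < Γ)
    (hcoer : ∀ v, γ * ‖v‖ ^ 2 ≤ a v v)
    (hbound : ∀ v w, a v w ≤ Γ * ‖v‖ * ‖w‖)
    {N : ℕ} (α : Fin (N + 1) → ℝ) (hmono : Monotone α)
    (u : V) (X : Fin (N + 1) → EuclideanSpace ℝ (Fin 2)) :
    ((∀ i, X i ∈ closure Ω) ∧ (∀ i, ev u (X i) = α i) ∧
        (∀ (v : V) (Y : Fin (N + 1) → EuclideanSpace ℝ (Fin 2)),
          (∀ i, Y i ∈ closure Ω) → (∀ i, ev v (Y i) = α i) →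
            (1 / 2) * a u u ≤ (1 / 2) * a v v)) ↔
      ((∀ i, X i ∈ closure Ω) ∧ (∀ i, ev u (X i) = α i) ∧
        (∀ (v : V) (y z : EuclideanSpace ℝ (Fin 2)),
          y ∈ closure Ω → z ∈ closure Ω →
          ev v y = α 0 → ev v z = α (Fin.last N) →
            (1 / 2) * a u u ≤ (1 / 2) * a v v)) := by
  constructor
  · rintro ⟨hX, hu, hmin⟩
    refine ⟨hX, hu, ?_⟩
    intro v y z hy hz hvy hvz
    have hpre : IsPreconnected (closure Ω) := (hΩconv.closure).isPreconnected
    have hIVT : Set.Icc (ev v y) (ev v z) ⊆ ev v '' closure Ω :=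
      hpre.intermediate_value hy hz (hev_cont v)
    have hchoice : ∀ i : Fin (N + 1), ∃ x ∈ closure Ω, ev v x = α i := by
      intro i
      have : α i ∈ Set.Icc (ev v y) (ev v z) := by
        rw [hvy, hvz]
        exact ⟨hmono (Fin.zero_le i), hmono (Fin.le_last i)⟩
      obtain ⟨x, hx, hxx⟩ := hIVT this
      exact ⟨x, hx, hxx⟩
    choose Y hY1 hY2 using hchoice
    exact hmin v Y hY1 hY2
  · rintro ⟨hX, hu, hmin⟩
    refine ⟨hX, hu, ?_⟩
    intro v Y hY1 hY2
    exact hmin v (Y 0) (Y (Fin.last N)) (hY1 0) (hY1 (Fin.last N)) (hY2 0) (hY2 (Fin.last N))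
end

section
/- Let V be one of H₀²(Ω) or H²(Ω) ∩ H₀¹(Ω) over a bounded convex Ω ⊂ ℝ², with a symmetric continuous coercive bilinear form a and point forces ℓ_X(v) = Σᵢ βᵢ v(Xᵢ), βᵢ ≠ 0. If (u, X) is a global minimizer of ℰ(v, Y) = ½a(v,v) − ℓ_Y(v) over V × (closure of Ω)ᴺ, then ℰ(u, X) < 0 and not all Xᵢ lie on ∂Ω. -/
/-- a global minimizer `(u,X)` of the point force energy
`ℰ(v,Y) = ½a(v,v) − Σᵢ βᵢ v(Yᵢ)` over `V × (closure Ω)ᴺ` has negative energy and not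
all force locations lie on `∂Ω`.  The space `V` (one of `H₀²(Ω)` or `H²(Ω)∩H₀¹(Ω)`)
is modelled abstractly via the evaluation map `ev`; `hbv` records that point
evaluation vanishes on `V` for boundary points, and `hint` that it does not vanish
at interior points. -/
theorem stmt13
    (Ω : Set (EuclideanSpace ℝ (Fin 2)))
    (hΩopen : IsOpen Ω) (hΩbdd : Bornology.IsBounded Ω)
    (hΩconv : Convex ℝ Ω) (hΩne : Ω.Nonempty)
    {V : Type*} [NormedAddCommGroup V] [InnerProductSpace ℝ V] [CompleteSpace V]
    (ev : V →ₗ[ℝ] (EuclideanSpace ℝ (Fin 2) → ℝ))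
    (hev_cont : ∀ v : V, ContinuousOn (ev v) (closure Ω))
    (hev_bdd : ∃ C : ℝ, ∀ (v : V), ∀ x ∈ closure Ω, |ev v x| ≤ C * ‖v‖)
    (hbv : ∀ x ∈ frontier Ω, ∀ v : V, ev v x = 0)
    (hint : ∀ x ∈ Ω, ∃ v : V, ev v x ≠ 0)
    (a : V →ₗ[ℝ] V →ₗ[ℝ] ℝ) (hsymm : ∀ v w, a v w = a w v)
    (γ Γ : ℝ) (hγ : 0 < γ) (hΓ : 0 < Γ)
    (hcoer : ∀ v, γ * ‖v‖ ^ 2 ≤ a v v)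
    (hbound : ∀ v w, a v w ≤ Γ * ‖v‖ * ‖w‖)
    {N : ℕ} (hN : 0 < N) (β : Fin N → ℝ) (hβ : ∀ i, β i ≠ 0)
    (u : V) (X : Fin N → EuclideanSpace ℝ (Fin 2))
    (hX : ∀ i, X i ∈ closure Ω)
    (hmin : ∀ (v : V) (Y : Fin N → EuclideanSpace ℝ (Fin 2)),
      (∀ i, Y i ∈ closure Ω) →
        (1 / 2) * a u u - ∑ i, β i * ev u (X i) ≤
          (1 / 2) * a v v - ∑ i, β i * ev v (Y i)) :
    (1 / 2) * a u u - ∑ i, β i * ev u (X i) < 0 ∧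
      ¬ ∀ i, X i ∈ frontier Ω := by

  -- an interior point and a test function not vanishing there
  obtain ⟨x₀, hx₀⟩ := hΩne
  obtain ⟨v, hv⟩ := hint x₀ hx₀
  have hvne : v ≠ 0 := by
    intro h; rw [h] at hv; simp at hv
  have hA : 0 < a v v := by
    refine lt_of_lt_of_le ?_ (hcoer v)
    have : 0 < ‖v‖ := norm_pos_iff.mpr hvne
    positivity
  -- a boundary point
  have hfr : (frontier Ω).Nonempty := by
    by_contra h
    rw [Set.not_nonempty_iff_eq_empty] at h
    have hcl : IsClopen Ω := isClopen_iff_frontier_eq_empty.mpr h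
    rcases isClopen_iff.mp hcl with h1 | h1
    · exact absurd (h1 ▸ hx₀) (Set.notMem_empty x₀)
    · have : Bornology.IsBounded (Set.univ : Set (EuclideanSpace ℝ (Fin 2))) := h1 ▸ hΩbdd
      obtain ⟨r, hr⟩ := (Metric.isBounded_iff_subset_ball x₀).mp this
      have h2 : x₀ + r • (EuclideanSpace.single 0 1) ∈ Metric.ball x₀ r :=
        hr (Set.mem_univ _)
      rw [Metric.mem_ball, dist_eq_norm] at h2
      simp only [add_sub_cancel_left, norm_smul, Real.norm_eq_abs] at h2
      have h3 : ‖(EuclideanSpace.single 0 1 : EuclideanSpace ℝ (Fin 2))‖ = 1 := by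
        simp [EuclideanSpace.norm_single]
      rw [h3, mul_one] at h2
      exact absurd h2 (not_lt.mpr (le_abs_self r))
  obtain ⟨b, hb⟩ := hfr
  set i0 : Fin N := ⟨0, hN⟩
  set c : ℝ := β i0 * ev v x₀ with hc
  have hcne : c ≠ 0 := mul_ne_zero (hβ i0) hv
  set A : ℝ := a v v with hAdef
  set t : ℝ := c / A with ht
  set Y : Fin N → EuclideanSpace ℝ (Fin 2) := fun i => if i = i0 then x₀ else b with hY
  have hYmem : ∀ i, Y i ∈ closure Ω := by
    intro i
    by_cases h : i = i0 <;> simp [hY, h]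
    · exact subset_closure hx₀
    · exact frontier_subset_closure hb
  have hevsmul : ∀ x, ev (t • v) x = t * ev v x := by
    intro x; rw [map_smul]; rfl
  have hsum : (∑ i, β i * ev (t • v) (Y i)) = t * c := by
    rw [Finset.sum_eq_single i0]
    · simp only [hY, if_pos rfl, hevsmul]; ring
    · intro i _ hi
      simp only [hY, if_neg hi, hevsmul, hbv b hb v, mul_zero]
    · intro h; exact absurd (Finset.mem_univ i0) h
  have haa : a (t • v) (t • v) = t * (t * A) := by
    rw [map_smul, map_smul]; rfl
  have hkey := hmin (t • v) Y hYmem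
  rw [hsum, haa] at hkey
  have hneg : (1 / 2) * (t * (t * A)) - t * c < 0 := by
    have htA : t * A = c := div_mul_cancel₀ c (ne_of_gt hA)
    have : (1 / 2) * (t * (t * A)) - t * c = -(1/2) * (c * c / A) := by
      rw [mul_comm t (t*A), htA, ht]; field_simp; ring
    rw [this]
    have hcc : 0 < c * c / A := div_pos (mul_self_pos.mpr hcne) hA
    linarith
  have hE : (1 / 2) * a u u - ∑ i, β i * ev u (X i) < 0 := lt_of_le_of_lt hkey hneg
  refine ⟨hE, ?_⟩
  intro hall
  have hsum0 : (∑ i, β i * ev u (X i)) = 0 := by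
    apply Finset.sum_eq_zero
    intro i _
    rw [hbv (X i) (hall i) u, mul_zero]
  rw [hsum0, sub_zero] at hE
  have : 0 ≤ a u u := le_trans (by positivity) (hcoer u)
  linarith
end

section
/- Clustering of point forces: let (u, X) ∈ V × (closure of Ω)ᴺ be a global minimizer of ℰ(v, Y) = ½a(v,v) − Σᵢ βᵢ v(Yᵢ) over V × (closure of Ω)ᴺ, with all βᵢ ≠ 0. Then there exist points X⁺, X⁻ in the closure of Ω, not both on ∂Ω, such that for every i: if βᵢ > 0 then Xᵢ equals X⁺ or both Xᵢ and X⁺ lie on ∂Ω, and if βᵢ < 0 then Xᵢ equals X⁻ or both Xᵢ and X⁻ lie on ∂Ω. -/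
/-!
At a minimizer `(u, X)`, perturbing `u` alone gives the Euler–Lagrange equation
`a(u, w) = Σᵢ βᵢ w(Xᵢ)`, and moving one force alone shows that `Xᵢ` maximizes `βᵢ u` over `Ω̄`.
Hence two forces of the same sign sit where `u` takes the same (extremal) value, so either can be
moved onto the other without changing the energy. The configuration obtained is again a minimizer,
and comparing its Euler–Lagrange equation with the original one shows that the two points define
the same evaluation functional on `V`; by the separation hypothesis they coincide or both lie on
`∂Ω`. Finally, if every force sat on `∂Ω` the load would vanish, so `u = 0`, and then moving a force
to any `x ∈ Ω` would again give a minimizer, forcing every `v ∈ V` to vanish at `x`.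
-/

open Finset Function

section Energy

variable {V P ι : Type*} [AddCommGroup V] [Module ℝ V] [Fintype ι]
  (a : V →ₗ[ℝ] V →ₗ[ℝ] ℝ) (ev : V →ₗ[ℝ] (P → ℝ)) (β : ι → ℝ)

/-- The load `ℓ_Y(v) = Σᵢ βᵢ v(Yᵢ)`. -/
def pointLoad (v : V) (Y : ι → P) : ℝ := ∑ i, β i * ev v (Y i)

/-- The energy `ℰ(v, Y) = ½ a(v, v) − ℓ_Y(v)`. -/
noncomputable def pointForceEnergy (v : V) (Y : ι → P) : ℝ := 1 / 2 * a v v - pointLoad ev β v Y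

def IsPointForceMinimizer (K : Set P) (u : V) (X : ι → P) : Prop :=
  (∀ i, X i ∈ K) ∧
    ∀ v Y, (∀ i, Y i ∈ K) → pointForceEnergy a ev β u X ≤ pointForceEnergy a ev β v Y

variable {a ev β}

lemma pointLoad_add_smul (u w : V) (t : ℝ) (Y : ι → P) :
    pointLoad ev β (u + t • w) Y = pointLoad ev β u Y + t * pointLoad ev β w Y := by
  simp only [pointLoad, map_add, map_smul, Pi.add_apply, Pi.smul_apply, smul_eq_mul, mul_sum,
    ← sum_add_distrib]
  exact sum_congr rfl fun i _ => by ring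

lemma pointLoad_update [DecidableEq ι] (v : V) (X : ι → P) (i : ι) (y : P) :
    pointLoad ev β v (update X i y) = pointLoad ev β v X + β i * (ev v y - ev v (X i)) := by
  rw [← sub_eq_iff_eq_add', pointLoad, pointLoad, ← sum_sub_distrib, sum_eq_single i]
  · rw [update_self]; ring
  · intro j _ hj
    rw [update_of_ne hj, sub_self]
  · simp

lemma pointForceEnergy_add_smul (hsymm : ∀ v w, a v w = a w v) (u w : V) (t : ℝ) (Y : ι → P) :
    pointForceEnergy a ev β (u + t • w) Y =
      pointForceEnergy a ev β u Y + t * (a u w - pointLoad ev β w Y) + t ^ 2 / 2 * a w w := by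
  simp only [pointForceEnergy, pointLoad_add_smul, map_add, map_smul, LinearMap.add_apply,
    LinearMap.smul_apply, smul_eq_mul, hsymm w u]
  ring

/-- Euler–Lagrange equation. -/
lemma apply_eq_pointLoad_of_forall_le (hsymm : ∀ v w, a v w = a w v)
    {u : V} {Y : ι → P}
    (hu : ∀ v, pointForceEnergy a ev β u Y ≤ pointForceEnergy a ev β v Y) (w : V) :
    a u w = pointLoad ev β w Y := by
  have hquad : ∀ t : ℝ, 0 ≤ a w w / 2 * (t * t) + (a u w - pointLoad ev β w Y) * t + 0 := by
    intro t
    have := hu (u + t • w)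
    rw [pointForceEnergy_add_smul hsymm] at this
    nlinarith
  have hdiscr := discrim_le_zero hquad
  rw [discrim, mul_zero, sub_zero] at hdiscr
  linarith [(sq_nonpos_iff _).1 hdiscr]

namespace IsPointForceMinimizer

variable {K : Set P} {u : V} {X : ι → P}

lemma apply_eq_pointLoad (hsymm : ∀ v w, a v w = a w v)
    (h : IsPointForceMinimizer a ev β K u X) (w : V) : a u w = pointLoad ev β w X :=
  apply_eq_pointLoad_of_forall_le hsymm (fun v => h.2 v X h.1) w

lemma mul_apply_le [DecidableEq ι] (h : IsPointForceMinimizer a ev β K u X) (i : ι) {y : P}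
    (hy : y ∈ K) : β i * ev u y ≤ β i * ev u (X i) := by
  have := h.2 u (update X i y) ((forall_update_iff X fun _ z => z ∈ K).2 ⟨hy, fun j _ => h.1 j⟩)
  simp only [pointForceEnergy, pointLoad_update] at this
  linarith

lemma update_of_mul_apply_eq [DecidableEq ι] (h : IsPointForceMinimizer a ev β K u X) (i : ι)
    {y : P} (hy : y ∈ K) (heq : β i * ev u y = β i * ev u (X i)) :
    IsPointForceMinimizer a ev β K u (update X i y) := by
  refine ⟨(forall_update_iff X fun _ z => z ∈ K).2 ⟨hy, fun j _ => h.1 j⟩, fun v Y hY => ?_⟩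
  have hsame : pointForceEnergy a ev β u (update X i y) = pointForceEnergy a ev β u X := by
    simp only [pointForceEnergy, pointLoad_update, mul_sub, heq, sub_self, add_zero]
  exact hsame ▸ h.2 v Y hY

lemma apply_eq_of_mul_apply_eq (hsymm : ∀ v w, a v w = a w v)
    (h : IsPointForceMinimizer a ev β K u X) {i : ι} (hβ : β i ≠ 0) {y : P} (hy : y ∈ K)
    (heq : β i * ev u y = β i * ev u (X i)) (w : V) : ev w y = ev w (X i) := by
  classical
  have hEL := h.apply_eq_pointLoad hsymm w
  rw [(h.update_of_mul_apply_eq i hy heq).apply_eq_pointLoad hsymm w, pointLoad_update,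
    add_eq_left, mul_eq_zero, sub_eq_zero] at hEL
  exact hEL.resolve_left hβ

lemma apply_eq_of_mul_pos (hsymm : ∀ v w, a v w = a w v)
    (h : IsPointForceMinimizer a ev β K u X) {i j : ι} (hij : 0 < β i * β j) (w : V) :
    ev w (X j) = ev w (X i) := by
  classical
  have hi := h.mul_apply_le i (h.1 j)
  have hj := h.mul_apply_le j (h.1 i)
  have hprod : β i * β j * (ev u (X j) - ev u (X i)) ^ 2 ≤ 0 := by nlinarith
  have hval : ev u (X j) = ev u (X i) :=
    sub_eq_zero.1 <| (sq_nonpos_iff _).1 <| (mul_nonpos_iff_pos_imp_nonpos.1 hprod).1 hij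
  exact h.apply_eq_of_mul_apply_eq hsymm (left_ne_zero_of_mul hij.ne') (h.1 j) (by rw [hval]) w

lemma exists_apply_ne_zero [Nonempty ι] (hsymm : ∀ v w, a v w = a w v)
    (hdef : ∀ v, a v v = 0 → v = 0) (hβ : ∀ i, β i ≠ 0)
    (h : IsPointForceMinimizer a ev β K u X) {y : P} (hy : y ∈ K) (hyv : ∃ v, ev v y ≠ 0) :
    ∃ i, ∃ v, ev v (X i) ≠ 0 := by
  by_contra! hvan
  have hu : u = 0 := hdef u <| by
    rw [h.apply_eq_pointLoad hsymm u, pointLoad]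
    simp [hvan]
  obtain ⟨i⟩ := ‹Nonempty ι›
  obtain ⟨v, hv⟩ := hyv
  refine hv ?_
  rw [h.apply_eq_of_mul_apply_eq hsymm (hβ i) hy (by simp [hu]) v, hvan]

end IsPointForceMinimizer

end Energy

section Frontier

variable {α : Type*} [TopologicalSpace α] {Ω : Set α}

/-- The relation `x ≙ y`. -/
def EqOrMemFrontier (Ω : Set α) (x y : α) : Prop :=
  x = y ∨ (x ∈ frontier Ω ∧ y ∈ frontier Ω)

lemma eqOrMemFrontier_of_forall_apply_eq {V : Type*} {ev : V → α → ℝ}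
    (hsep : ∀ x ∈ Ω, ∀ y ∈ closure Ω, x ≠ y → ∃ v, ev v x ≠ ev v y) {x y : α}
    (hx : x ∈ closure Ω) (hy : y ∈ closure Ω) (h : ∀ v, ev v x = ev v y) :
    EqOrMemFrontier Ω x y := by
  rcases (closure_eq_self_union_frontier Ω).subset hx with hxΩ | hxF
  · left
    by_contra hne
    obtain ⟨v, hv⟩ := hsep x hxΩ y hy hne
    exact hv (h v)
  rcases (closure_eq_self_union_frontier Ω).subset hy with hyΩ | hyF
  · left
    by_contra hne
    obtain ⟨v, hv⟩ := hsep y hyΩ x hx (Ne.symm hne)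
    exact hv (h v).symm
  · exact Or.inr ⟨hxF, hyF⟩

lemma exists_forall_eqOrMemFrontier (hfr : (frontier Ω).Nonempty) {ι : Type*} (s : Set ι)
    {X : ι → α} (hX : ∀ i, X i ∈ closure Ω)
    (hs : ∀ i ∈ s, ∀ j ∈ s, EqOrMemFrontier Ω (X j) (X i)) :
    ∃ p ∈ closure Ω, (∀ i ∈ s, X i ∈ Ω → p ∈ Ω) ∧ ∀ i ∈ s, EqOrMemFrontier Ω (X i) p := by
  by_cases hin : ∃ i ∈ s, X i ∈ Ω
  · obtain ⟨i, hi, hXi⟩ := hin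
    exact ⟨X i, hX i, fun _ _ _ => hXi, fun j hj => hs i hi j hj⟩
  · push Not at hin
    obtain ⟨z, hz⟩ := hfr
    refine ⟨z, frontier_subset_closure hz, fun i hi hXi => absurd hXi (hin i hi),
      fun i hi => Or.inr ⟨?_, hz⟩⟩
    exact ((closure_eq_self_union_frontier Ω).subset (hX i)).resolve_left (hin i hi)

end Frontier

theorem stmt14_general
    (Ω : Set (EuclideanSpace ℝ (Fin 2)))
    (hΩopen : IsOpen Ω) (hΩbdd : Bornology.IsBounded Ω)
    (hΩne : Ω.Nonempty)
    {V : Type*} [NormedAddCommGroup V] [InnerProductSpace ℝ V]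
    (ev : V →ₗ[ℝ] (EuclideanSpace ℝ (Fin 2) → ℝ))
    (hbv : ∀ x ∈ frontier Ω, ∀ v : V, ev v x = 0)
    (hint : ∀ x ∈ Ω, ∃ v : V, ev v x ≠ 0)
    (hsep : ∀ x ∈ Ω, ∀ y ∈ closure Ω, x ≠ y → ∃ v : V, ev v x ≠ ev v y)
    (a : V →ₗ[ℝ] V →ₗ[ℝ] ℝ) (hsymm : ∀ v w, a v w = a w v)
    (γ : ℝ) (hγ : 0 < γ)
    (hcoer : ∀ v, γ * ‖v‖ ^ 2 ≤ a v v)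
    {N : ℕ} (hN : 0 < N) (β : Fin N → ℝ) (hβ : ∀ i, β i ≠ 0)
    (u : V) (X : Fin N → EuclideanSpace ℝ (Fin 2))
    (hX : ∀ i, X i ∈ closure Ω)
    (hmin : ∀ (v : V) (Y : Fin N → EuclideanSpace ℝ (Fin 2)),
      (∀ i, Y i ∈ closure Ω) →
        (1 / 2) * a u u - ∑ i, β i * ev u (X i) ≤
          (1 / 2) * a v v - ∑ i, β i * ev v (Y i)) :
    ∃ Xp ∈ closure Ω, ∃ Xm ∈ closure Ω,
      ¬ (Xp ∈ frontier Ω ∧ Xm ∈ frontier Ω) ∧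
      ∀ i, (0 < β i → (X i = Xp ∨ (X i ∈ frontier Ω ∧ Xp ∈ frontier Ω))) ∧
           (β i < 0 → (X i = Xm ∨ (X i ∈ frontier Ω ∧ Xm ∈ frontier Ω))) := by
  have hdef : ∀ v, a v v = 0 → v = 0 := fun v hv => by
    have : ‖v‖ ^ 2 = 0 := by nlinarith [hcoer v, sq_nonneg ‖v‖]
    simpa using this
  have hu : IsPointForceMinimizer a ev β (closure Ω) u X := ⟨hX, hmin⟩
  have hsame : ∀ i j, 0 < β i * β j → EqOrMemFrontier Ω (X j) (X i) := fun i j hij =>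
    eqOrMemFrontier_of_forall_apply_eq hsep (hX j) (hX i) (hu.apply_eq_of_mul_pos hsymm hij)
  obtain ⟨y, hy⟩ := hΩne
  have : Nonempty (Fin N) := ⟨⟨0, hN⟩⟩
  obtain ⟨k, w, hk⟩ :=
    hu.exists_apply_ne_zero hsymm hdef hβ (subset_closure hy) (hint y hy)
  have hkΩ : X k ∈ Ω :=
    ((closure_eq_self_union_frontier Ω).subset (hX k)).resolve_right fun hF => hk (hbv _ hF w)
  have hfr : (frontier Ω).Nonempty :=
    nonempty_frontier_iff.mpr ⟨⟨y, hy⟩, fun h => NormedSpace.unbounded_univ ℝ _ (h ▸ hΩbdd)⟩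
  obtain ⟨Xp, hXp, hpΩ, hp⟩ := exists_forall_eqOrMemFrontier hfr {i | 0 < β i} hX
    fun i hi j hj => hsame i j (mul_pos hi hj)
  obtain ⟨Xm, hXm, hmΩ, hm⟩ := exists_forall_eqOrMemFrontier hfr {i | β i < 0} hX
    fun i hi j hj => hsame i j (mul_pos_of_neg_of_neg hi hj)
  refine ⟨Xp, hXp, Xm, hXm, ?_, fun i => ⟨hp i, hm i⟩⟩
  rintro ⟨hpF, hmF⟩
  rcases (hβ k).lt_or_gt with hβk | hβk
  · exact hΩopen.inter_frontier_eq.subset ⟨hmΩ k hβk hkΩ, hmF⟩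
  · exact hΩopen.inter_frontier_eq.subset ⟨hpΩ k hβk hkΩ, hpF⟩

/-- clustering of point forces.  A global minimizer `(u,X)` of
`ℰ(v,Y) = ½a(v,v) − Σᵢ βᵢ v(Yᵢ)` over `V × (closure Ω)ᴺ` has cluster points
`X⁺, X⁻` in the closure of `Ω`, not both on `∂Ω`, such that `βᵢ > 0` implies
`Xᵢ ≙ X⁺` and `βᵢ < 0` implies `Xᵢ ≙ X⁻`, where `x ≙ y` means `x = y` or both lie
on `∂Ω` (on which point evaluation vanishes on `V`).
`V` (Dirichlet or Navier subspace of `H²(Ω)`) is modelled abstractly via `ev`;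
`hbv` records the vanishing of point evaluation on the boundary, `hint` its
nonvanishing at interior points, and `hsep` that evaluations at distinct points
(one interior) are distinct functionals. -/
theorem stmt14
    (Ω : Set (EuclideanSpace ℝ (Fin 2)))
    (hΩopen : IsOpen Ω) (hΩbdd : Bornology.IsBounded Ω)
    (hΩconv : Convex ℝ Ω) (hΩne : Ω.Nonempty)
    {V : Type*} [NormedAddCommGroup V] [InnerProductSpace ℝ V] [CompleteSpace V]
    (ev : V →ₗ[ℝ] (EuclideanSpace ℝ (Fin 2) → ℝ))
    (hev_cont : ∀ v : V, ContinuousOn (ev v) (closure Ω))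
    (hev_bdd : ∃ C : ℝ, ∀ (v : V), ∀ x ∈ closure Ω, |ev v x| ≤ C * ‖v‖)
    (hbv : ∀ x ∈ frontier Ω, ∀ v : V, ev v x = 0)
    (hint : ∀ x ∈ Ω, ∃ v : V, ev v x ≠ 0)
    (hsep : ∀ x ∈ Ω, ∀ y ∈ closure Ω, x ≠ y → ∃ v : V, ev v x ≠ ev v y)
    (a : V →ₗ[ℝ] V →ₗ[ℝ] ℝ) (hsymm : ∀ v w, a v w = a w v)
    (γ Γ : ℝ) (hγ : 0 < γ) (hΓ : 0 < Γ)
    (hcoer : ∀ v, γ * ‖v‖ ^ 2 ≤ a v v)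
    (hbound : ∀ v w, a v w ≤ Γ * ‖v‖ * ‖w‖)
    {N : ℕ} (hN : 0 < N) (β : Fin N → ℝ) (hβ : ∀ i, β i ≠ 0)
    (u : V) (X : Fin N → EuclideanSpace ℝ (Fin 2))
    (hX : ∀ i, X i ∈ closure Ω)
    (hmin : ∀ (v : V) (Y : Fin N → EuclideanSpace ℝ (Fin 2)),
      (∀ i, Y i ∈ closure Ω) →
        (1 / 2) * a u u - ∑ i, β i * ev u (X i) ≤
          (1 / 2) * a v v - ∑ i, β i * ev v (Y i)) :
    ∃ Xp ∈ closure Ω, ∃ Xm ∈ closure Ω,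
      ¬ (Xp ∈ frontier Ω ∧ Xm ∈ frontier Ω) ∧
      ∀ i, (0 < β i → (X i = Xp ∨ (X i ∈ frontier Ω ∧ Xp ∈ frontier Ω))) ∧
           (β i < 0 → (X i = Xm ∨ (X i ∈ frontier Ω ∧ Xm ∈ frontier Ω))) :=
  stmt14_general Ω hΩopen hΩbdd hΩne ev hbv hint hsep a hsymm γ hγ hcoer hN β hβ u X hX hmin
end

section
/- If all coefficients βᵢ have the same sign, then (u, X) is a global minimizer of the point-force energy ℰ over V × (closure of Ω)ᴺ if and only if X₁ = X₂ = … = X_N lies in the interior Ω and (u, X₁) is a global minimizer of the single-force problem with force ℓ = (Σᵢ βᵢ) δ_{X₁}. -/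
lemma stmt15_el {V : Type*} [NormedAddCommGroup V] [InnerProductSpace ℝ V]
    (a : V →ₗ[ℝ] V →ₗ[ℝ] ℝ) (hsymm : ∀ v w, a v w = a w v)
    (γ : ℝ) (hγ : 0 < γ) (hcoer : ∀ v, γ * ‖v‖ ^ 2 ≤ a v v)
    (u : V) (L : V →ₗ[ℝ] ℝ)
    (hmin : ∀ v, (1/2 : ℝ) * a u u - L u ≤ (1/2) * a v v - L v) :
    ∀ w, a u w = L w := by
  intro w
  have hk : (0:ℝ) ≤ a w w := le_trans (by positivity) (hcoer w)
  have key : ∀ t : ℝ, 0 ≤ t * (a u w - L w) + t ^ 2 / 2 * a w w := by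
    intro t
    have h := hmin (u + t • w)
    have hsw : a w u = a u w := hsymm w u
    simp only [map_add, map_smul, LinearMap.add_apply, LinearMap.smul_apply,
      smul_eq_mul] at h
    rw [hsw] at h
    nlinarith [h]
  set c : ℝ := a u w - L w with hc
  set k : ℝ := a w w with hkdef
  have hk1 : (0:ℝ) < k + 1 := by linarith
  have h2 := key (-(c / (k + 1)))
  have e : -(c / (k + 1)) * c + (-(c / (k + 1))) ^ 2 / 2 * k
      = -(c ^ 2 * (k + 2)) / (2 * (k + 1) ^ 2) := by
    field_simp
    ring
  rw [e] at h2
  have h3 : 0 ≤ -(c ^ 2 * (k + 2)) := by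
    have h4 := mul_nonneg h2 (le_of_lt (by positivity : (0:ℝ) < 2 * (k + 1) ^ 2))
    rwa [div_mul_cancel₀] at h4
    positivity
  have hc2 : c ^ 2 = 0 := le_antisymm (by nlinarith) (sq_nonneg c)
  exact sub_eq_zero.mp (pow_eq_zero_iff two_ne_zero |>.mp hc2)

noncomputable def stmt15Lsum {V : Type*} [NormedAddCommGroup V] [InnerProductSpace ℝ V] {n : ℕ}
    (ev : V →ₗ[ℝ] (EuclideanSpace ℝ (Fin 2) → ℝ)) (β : Fin n → ℝ)
    (X : Fin n → EuclideanSpace ℝ (Fin 2)) : V →ₗ[ℝ] ℝ where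
  toFun v := ∑ i, β i * ev v (X i)
  map_add' v w := by
    simp only [map_add, Pi.add_apply, mul_add]
    rw [Finset.sum_add_distrib]
  map_smul' t v := by
    simp only [map_smul, Pi.smul_apply, smul_eq_mul, RingHom.id_apply]
    rw [Finset.mul_sum]
    exact Finset.sum_congr rfl fun i _ => by ring

@[simp] lemma stmt15Lsum_apply {V : Type*} [NormedAddCommGroup V] [InnerProductSpace ℝ V] {n : ℕ}
    (ev : V →ₗ[ℝ] (EuclideanSpace ℝ (Fin 2) → ℝ)) (β : Fin n → ℝ)
    (X : Fin n → EuclideanSpace ℝ (Fin 2)) (v : V) :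
    stmt15Lsum ev β X v = ∑ i, β i * ev v (X i) := rfl

lemma stmt15_core
    (Ω : Set (EuclideanSpace ℝ (Fin 2)))
    (hΩopen : IsOpen Ω) (hΩbdd : Bornology.IsBounded Ω) (hΩne : Ω.Nonempty)
    {V : Type*} [NormedAddCommGroup V] [InnerProductSpace ℝ V]
    (ev : V →ₗ[ℝ] (EuclideanSpace ℝ (Fin 2) → ℝ))
    (hev_cont : ∀ v : V, ContinuousOn (ev v) (closure Ω))
    (hbv : ∀ x ∈ frontier Ω, ∀ v : V, ev v x = 0)
    (hint : ∀ x ∈ Ω, ∃ v : V, ev v x ≠ 0)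
    (hsep : ∀ x ∈ Ω, ∀ y ∈ closure Ω, x ≠ y → ∃ v : V, ev v x ≠ ev v y)
    (a : V →ₗ[ℝ] V →ₗ[ℝ] ℝ) (hsymm : ∀ v w, a v w = a w v)
    (γ : ℝ) (hγ : 0 < γ)
    (hcoer : ∀ v, γ * ‖v‖ ^ 2 ≤ a v v)
    {N : ℕ} (β : Fin (N + 1) → ℝ)
    (hpos : ∀ i, 0 < β i)
    (u : V) (X : Fin (N + 1) → EuclideanSpace ℝ (Fin 2)) :
    ((∀ i, X i ∈ closure Ω) ∧
        (∀ (v : V) (Y : Fin (N + 1) → EuclideanSpace ℝ (Fin 2)),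
          (∀ i, Y i ∈ closure Ω) →
            (1 / 2) * a u u - ∑ i, β i * ev u (X i) ≤
              (1 / 2) * a v v - ∑ i, β i * ev v (Y i))) ↔
      ((∀ i, X i = X 0) ∧ X 0 ∈ Ω ∧
        (∀ (v : V) (y : EuclideanSpace ℝ (Fin 2)), y ∈ closure Ω →
          (1 / 2) * a u u - (∑ i, β i) * ev u (X 0) ≤
            (1 / 2) * a v v - (∑ i, β i) * ev v y)) := by
  have hclN : Ω ⊆ closure Ω := subset_closure
  have hcomp : IsCompact (closure Ω) := hΩbdd.isCompact_closure
  have hclne : (closure Ω).Nonempty := hΩne.mono hclN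
  have hS : 0 < ∑ i, β i := Finset.sum_pos (fun i _ => hpos i) Finset.univ_nonempty
  constructor
  · rintro ⟨hX, hmin⟩
    -- Euler-Lagrange for X
    have hEL : ∀ w, a u w = ∑ i, β i * ev w (X i) := by
      have := stmt15_el a hsymm γ hγ hcoer u (stmt15Lsum ev β X) (fun v => by
        simpa using hmin v X hX)
      simpa using this
    -- each X i maximizes ev u on closure Ω
    have hmax : ∀ i, ∀ y ∈ closure Ω, ev u y ≤ ev u (X i) := by
      intro i y hy
      have hY : ∀ j, Function.update X i y j ∈ closure Ω := by
        intro j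
        by_cases hj : j = i
        · subst hj; simp [hy]
        · simp [Function.update_of_ne hj, hX j]
      have h := hmin u (Function.update X i y) hY
      have hdiff : ∑ j, β j * ev u (Function.update X i y j) - ∑ j, β j * ev u (X j)
          = β i * (ev u y - ev u (X i)) := by
        rw [← Finset.sum_sub_distrib, Finset.sum_eq_single i]
        · simp [Function.update_self]; ring
        · intro j _ hj
          simp [Function.update_of_ne hj]
        · simp
      have hb := hpos i
      nlinarith [h, hdiff]
    have hall : ∀ i, ev u (X i) = ev u (X 0) :=
      fun i => le_antisymm (hmax 0 (X i) (hX i)) (hmax i (X 0) (hX 0))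
    -- a u u > 0
    have hauu : a u u = (∑ i, β i) * ev u (X 0) := by
      rw [hEL u, Finset.sum_mul]
      exact Finset.sum_congr rfl fun i _ => by rw [hall i]
    have hEneg : (1 / 2 : ℝ) * a u u - ∑ i, β i * ev u (X i) < 0 := by
      obtain ⟨x, hx⟩ := hΩne
      obtain ⟨v, hv⟩ := hint x hx
      have hvne : v ≠ 0 := fun h => hv (by simp [h])
      have hnv : 0 < ‖v‖ := norm_pos_iff.mpr hvne
      have havv : 0 < a v v :=
        lt_of_lt_of_le (mul_pos hγ (pow_pos hnv 2)) (hcoer v)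
      set t : ℝ := (∑ i, β i) * ev v x / a v v with ht
      have htne : t ≠ 0 := by
        apply div_ne_zero _ (ne_of_gt havv)
        exact mul_ne_zero (ne_of_gt hS) hv
      have h := hmin (t • v) (fun _ => x) (fun _ => hclN hx)
      simp only [map_smul, LinearMap.smul_apply, Pi.smul_apply, smul_eq_mul] at h
      have hsum : ∑ i, β i * (t * ev v x) = (∑ i, β i) * (t * ev v x) := by
        rw [Finset.sum_mul]
      rw [hsum] at h
      have hval : (1/2 : ℝ) * (t * (t * a v v)) - (∑ i, β i) * (t * ev v x)
          = -(((∑ i, β i) * ev v x) ^ 2) / (2 * a v v) := by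
        rw [ht]; field_simp; ring
      rw [hval] at h
      have hne2 : (∑ i, β i) * ev v x ≠ 0 := mul_ne_zero (ne_of_gt hS) hv
      have : -(((∑ i, β i) * ev v x) ^ 2) / (2 * a v v) < 0 := by
        apply div_neg_of_neg_of_pos
        · have := pow_pos (abs_pos.mpr hne2) 2
          nlinarith [sq_abs ((∑ i, β i) * ev v x)]
        · linarith
      linarith
    have hEval : (1 / 2 : ℝ) * a u u - ∑ i, β i * ev u (X i)
        = -(1/2) * a u u := by
      have : ∑ i, β i * ev u (X i) = a u u := (hEL u).symm
      linarith [this]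
    have hauupos : 0 < a u u := by
      rw [hEval] at hEneg; linarith
    have hM : 0 < ev u (X 0) := by
      by_contra hM
      push_neg at hM
      have : a u u ≤ 0 := by
        rw [hauu]
        exact mul_nonpos_of_nonneg_of_nonpos (le_of_lt hS) hM
      linarith
    -- interiority
    have hXi : ∀ i, X i ∈ Ω := by
      intro i
      by_contra hnot
      have hfr : X i ∈ frontier Ω := by
        rw [hΩopen.frontier_eq]
        exact ⟨hX i, hnot⟩
      have := hbv (X i) hfr u
      rw [hall i] at this
      linarith [hM, this.le]
    -- clustered Euler-Lagrange
    have hELc : ∀ i, ∀ w, a u w = (∑ j, β j) * ev w (X i) := by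
      intro i
      have hmin' : ∀ v, (1/2 : ℝ) * a u u - stmt15Lsum ev β (fun _ => X i) u
          ≤ (1/2) * a v v - stmt15Lsum ev β (fun _ => X i) v := by
        intro v
        have h := hmin v (fun _ => X i) (fun _ => hX i)
        simp only [stmt15Lsum_apply]
        have h1 : ∑ j, β j * ev u (X j) = ∑ j, β j * ev u (X i) := by
          refine Finset.sum_congr rfl fun j _ => ?_
          rw [hall j, hall i]
        linarith [h, h1.symm.le, h1.le]
      have := stmt15_el a hsymm γ hγ hcoer u (stmt15Lsum ev β (fun _ => X i)) hmin'
      intro w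
      rw [this w]
      simp [Finset.sum_mul]
    -- all points coincide
    have hcl : ∀ i, X i = X 0 := by
      intro i
      by_contra hne
      obtain ⟨w, hw⟩ := hsep (X 0) (hXi 0) (X i) (hX i) (fun h => hne h.symm)
      have h1 := hELc i w
      have h2 := hELc 0 w
      rw [h1] at h2
      have := mul_left_cancel₀ (ne_of_gt hS) h2
      exact hw this.symm
    refine ⟨hcl, hXi 0, ?_⟩
    intro v y hy
    have h := hmin v (fun _ => y) (fun _ => hy)
    have h1 : ∑ i, β i * ev u (X i) = (∑ i, β i) * ev u (X 0) := by
      rw [Finset.sum_mul]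
      exact Finset.sum_congr rfl fun i _ => by rw [hall i]
    have h2 : ∑ i, β i * ev v y = (∑ i, β i) * ev v y := by
      rw [Finset.sum_mul]
    linarith [h]
  · rintro ⟨hcl, hX0, hsingle⟩
    have hXcl : ∀ i, X i ∈ closure Ω := fun i => by rw [hcl i]; exact hclN hX0
    refine ⟨hXcl, ?_⟩
    intro v Y hY
    obtain ⟨y, hy, hymax⟩ := hcomp.exists_isMaxOn hclne (hev_cont v)
    have h1 : ∑ i, β i * ev v (Y i) ≤ (∑ i, β i) * ev v y := by
      rw [Finset.sum_mul]
      refine Finset.sum_le_sum fun i _ => ?_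
      exact mul_le_mul_of_nonneg_left (hymax (hY i)) (le_of_lt (hpos i))
    have h2 : ∑ i, β i * ev u (X i) = (∑ i, β i) * ev u (X 0) := by
      rw [Finset.sum_mul]
      exact Finset.sum_congr rfl fun i _ => by rw [hcl i]
    have h := hsingle v y hy
    linarith




/-- if all coefficients `βᵢ` have the same sign, then `(u,X)` is a
global minimizer of the point force energy `ℰ(v,Y) = ½a(v,v) − Σᵢ βᵢ v(Yᵢ)` over
`V × (closure Ω)ᴺ` if and only if all locations coincide, lie in the interior `Ω`,
and `(u, X₁)` is a global minimizer of the single-force problem with force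
`(Σᵢ βᵢ) δ_{X₁}`.  The space `V` (Dirichlet or Navier subspace of `H²(Ω)`) is
modelled abstractly via the evaluation map `ev` with boundary vanishing `hbv`,
interior nonvanishing `hint` and separation `hsep`. -/
theorem stmt15
    (Ω : Set (EuclideanSpace ℝ (Fin 2)))
    (hΩopen : IsOpen Ω) (hΩbdd : Bornology.IsBounded Ω)
    (hΩconv : Convex ℝ Ω) (hΩne : Ω.Nonempty)
    {V : Type*} [NormedAddCommGroup V] [InnerProductSpace ℝ V] [CompleteSpace V]
    (ev : V →ₗ[ℝ] (EuclideanSpace ℝ (Fin 2) → ℝ))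
    (hev_cont : ∀ v : V, ContinuousOn (ev v) (closure Ω))
    (hev_bdd : ∃ C : ℝ, ∀ (v : V), ∀ x ∈ closure Ω, |ev v x| ≤ C * ‖v‖)
    (hbv : ∀ x ∈ frontier Ω, ∀ v : V, ev v x = 0)
    (hint : ∀ x ∈ Ω, ∃ v : V, ev v x ≠ 0)
    (hsep : ∀ x ∈ Ω, ∀ y ∈ closure Ω, x ≠ y → ∃ v : V, ev v x ≠ ev v y)
    (a : V →ₗ[ℝ] V →ₗ[ℝ] ℝ) (hsymm : ∀ v w, a v w = a w v)
    (γ Γ : ℝ) (hγ : 0 < γ) (hΓ : 0 < Γ)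
    (hcoer : ∀ v, γ * ‖v‖ ^ 2 ≤ a v v)
    (hbound : ∀ v w, a v w ≤ Γ * ‖v‖ * ‖w‖)
    {N : ℕ} (β : Fin (N + 1) → ℝ) (hβ : ∀ i, β i ≠ 0)
    (hsign : (∀ i, 0 < β i) ∨ (∀ i, β i < 0))
    (u : V) (X : Fin (N + 1) → EuclideanSpace ℝ (Fin 2)) :
    ((∀ i, X i ∈ closure Ω) ∧
        (∀ (v : V) (Y : Fin (N + 1) → EuclideanSpace ℝ (Fin 2)),
          (∀ i, Y i ∈ closure Ω) →
            (1 / 2) * a u u - ∑ i, β i * ev u (X i) ≤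
              (1 / 2) * a v v - ∑ i, β i * ev v (Y i))) ↔
      ((∀ i, X i = X 0) ∧ X 0 ∈ Ω ∧
        (∀ (v : V) (y : EuclideanSpace ℝ (Fin 2)), y ∈ closure Ω →
          (1 / 2) * a u u - (∑ i, β i) * ev u (X 0) ≤
            (1 / 2) * a v v - (∑ i, β i) * ev v y)) := by
  rcases hsign with hpos | hneg
  · exact stmt15_core Ω hΩopen hΩbdd hΩne ev hev_cont hbv hint hsep a hsymm γ hγ hcoer β hpos u X
  · have key := stmt15_core Ω hΩopen hΩbdd hΩne ev hev_cont hbv hint hsep a hsymm γ hγ hcoer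
      (fun i => -β i) (fun i => neg_pos.mpr (hneg i)) (-u) X
    constructor
    · rintro ⟨h1, h2⟩
      have h2' : ∀ (v : V) (Y : Fin (N + 1) → EuclideanSpace ℝ (Fin 2)),
          (∀ i, Y i ∈ closure Ω) →
            (1 / 2) * a (-u) (-u) - ∑ i, (fun i => -β i) i * ev (-u) (X i) ≤
              (1 / 2) * a v v - ∑ i, (fun i => -β i) i * ev v (Y i) := by
        intro v Y hY
        have h := h2 (-v) Y hY
        simp only [map_neg, LinearMap.neg_apply, Pi.neg_apply, mul_neg, neg_mul,
          neg_neg, Finset.sum_neg_distrib, sub_neg_eq_add] at h ⊢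
        linarith
      obtain ⟨hc, hX0, h3⟩ := key.mp ⟨h1, h2'⟩
      refine ⟨hc, hX0, ?_⟩
      intro v y hy
      have h := h3 (-v) y hy
      simp only [map_neg, LinearMap.neg_apply, Pi.neg_apply, mul_neg, neg_mul,
        neg_neg, Finset.sum_neg_distrib, sub_neg_eq_add] at h ⊢
      linarith
    · rintro ⟨hc, hX0, h3⟩
      have h3' : ∀ (v : V) (y : EuclideanSpace ℝ (Fin 2)), y ∈ closure Ω →
          (1 / 2) * a (-u) (-u) - (∑ i, (fun i => -β i) i) * ev (-u) (X 0) ≤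
            (1 / 2) * a v v - (∑ i, (fun i => -β i) i) * ev v y := by
        intro v y hy
        have h := h3 (-v) y hy
        simp only [map_neg, LinearMap.neg_apply, Pi.neg_apply, mul_neg, neg_mul,
          neg_neg, Finset.sum_neg_distrib, sub_neg_eq_add] at h ⊢
        linarith
      obtain ⟨h1, h2⟩ := key.mpr ⟨hc, hX0, h3'⟩
      refine ⟨h1, ?_⟩
      intro v Y hY
      have h := h2 (-v) Y hY
      simp only [map_neg, LinearMap.neg_apply, Pi.neg_apply, mul_neg, neg_mul,
        neg_neg, Finset.sum_neg_distrib, sub_neg_eq_add] at h ⊢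
      linarith
end

section
/- Let (u, X) be a solution of the point-force global minimization, and set β⁺ = Σ_{βᵢ>0} βᵢ and β⁻ = Σ_{βᵢ<0} βᵢ. If |β⁺| > |β⁻| then the positive cluster point X⁺ lies in the interior Ω, and if |β⁺| < |β⁻| then the negative cluster point X⁻ lies in the interior Ω. -/
/-!
Suppose `|β⁻| < |β⁺|` but `X⁺` lies on `∂Ω`, where every `v ∈ V` vanishes. Then the positive
forces do no work, and the energy of the minimizer is `E = ½ a(u,u) - β⁻ u(X⁻)`. This is
negative, since `Σ βᵢ ≠ 0` lets a multiple of any `w` with `w(x₀) ≠ 0` at an interior point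
reach negative energy. Moving the positive forces to `X⁻`, the negative ones to `X⁺`, and
scaling `u` by `c = β⁺ / β⁻` gives energy `c² E < E`, contradicting minimality. The case
`|β⁺| < |β⁻|` is the same after replacing `(β, u)` by `(-β, -u)`.
-/

open Finset

section Weights

variable {ι : Type*} [Fintype ι]

noncomputable def posWeight (β : ι → ℝ) : ℝ := ∑ i ∈ univ.filter (fun i => 0 < β i), β i

noncomputable def negWeight (β : ι → ℝ) : ℝ := ∑ i ∈ univ.filter (fun i => β i < 0), β i

lemma posWeight_nonneg (β : ι → ℝ) : 0 ≤ posWeight β :=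
  sum_nonneg fun _ hi => (mem_filter.mp hi).2.le

lemma negWeight_nonpos (β : ι → ℝ) : negWeight β ≤ 0 :=
  sum_nonpos fun _ hi => (mem_filter.mp hi).2.le

lemma posWeight_neg (β : ι → ℝ) : posWeight (-β) = -negWeight β := by
  simp only [posWeight, negWeight, Pi.neg_apply, neg_pos, sum_neg_distrib]

lemma negWeight_neg (β : ι → ℝ) : negWeight (-β) = -posWeight β := by
  simp only [posWeight, negWeight, Pi.neg_apply, neg_lt_zero, sum_neg_distrib]

lemma sum_mul_eq_of_sign (β f : ι → ℝ) {p q : ℝ}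
    (hp : ∀ i, 0 < β i → f i = p) (hq : ∀ i, β i < 0 → f i = q) :
    ∑ i, β i * f i = posWeight β * p + negWeight β * q := by
  have hsplit : ∀ i, β i * f i =
      (if 0 < β i then β i else 0) * p + (if β i < 0 then β i else 0) * q := by
    intro i
    rcases lt_trichotomy (β i) 0 with h | h | h
    · simp [h, h.not_gt, hq i h]
    · simp [h]
    · simp [h, h.not_gt, hp i h]
  simp only [hsplit, sum_add_distrib, ← sum_mul, ← sum_filter, posWeight, negWeight]

lemma sum_eq_posWeight_add_negWeight (β : ι → ℝ) :
    ∑ i, β i = posWeight β + negWeight β := by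
  simpa using sum_mul_eq_of_sign β 1 (p := 1) (q := 1) (fun _ _ => rfl) (fun _ _ => rfl)

end Weights

section PointEnergy

variable {V P ι : Type*} [AddCommGroup V] [Module ℝ V] [Fintype ι]
  (a : V →ₗ[ℝ] V →ₗ[ℝ] ℝ) (ev : V →ₗ[ℝ] (P → ℝ))

noncomputable def pointEnergy (β : ι → ℝ) (v : V) (Y : ι → P) : ℝ :=
  1 / 2 * a v v - ∑ i, β i * ev v (Y i)

lemma pointEnergy_smul (β : ι → ℝ) (c : ℝ) (v : V) (Y : ι → P) :
    pointEnergy a ev β (c • v) Y = c ^ 2 * (1 / 2 * a v v) - c * ∑ i, β i * ev v (Y i) := by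
  simp only [pointEnergy, map_smul, LinearMap.smul_apply, Pi.smul_apply, smul_eq_mul, mul_sum]
  ring_nf

lemma pointEnergy_neg_neg (β : ι → ℝ) (v : V) (Y : ι → P) :
    pointEnergy a ev (-β) (-v) Y = pointEnergy a ev β v Y := by
  simp [pointEnergy]

lemma exists_pointEnergy_lt_zero {β : ι → ℝ} (hβ : ∑ i, β i ≠ 0) {w : V} {x : P}
    (hw : 0 < a w w) (hx : ev w x ≠ 0) : ∃ v, pointEnergy a ev β v (fun _ => x) < 0 := by
  set S := ∑ i, β i
  refine ⟨(S * ev w x / a w w) • w, ?_⟩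
  have hsum : ∑ i, β i * ev w x = S * ev w x := (sum_mul ..).symm
  rw [pointEnergy_smul, hsum]
  -- the minimum over `t` of `½ t² a(w,w) - t S w(x)` is `-(S w(x))² / (2 a(w,w))`
  have hval : (S * ev w x / a w w) ^ 2 * (1 / 2 * a w w) - S * ev w x / a w w * (S * ev w x)
      = -(S * ev w x) ^ 2 / (2 * a w w) := by
    field_simp
    ring
  rw [hval, neg_div, neg_lt_zero]
  have := mul_ne_zero hβ hx
  positivity

variable [TopologicalSpace P]

lemma sum_mul_ev_eq_of_cluster {Ω : Set P} (hbv : ∀ x ∈ frontier Ω, ∀ v, ev v x = 0)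
    {β : ι → ℝ} {X : ι → P} {Xp Xm : P}
    (hcluster : ∀ i,
      (0 < β i → (X i = Xp ∨ (X i ∈ frontier Ω ∧ Xp ∈ frontier Ω))) ∧
      (β i < 0 → (X i = Xm ∨ (X i ∈ frontier Ω ∧ Xm ∈ frontier Ω))))
    (v : V) : ∑ i, β i * ev v (X i) = posWeight β * ev v Xp + negWeight β * ev v Xm := by
  have heval : ∀ {x y}, x = y ∨ (x ∈ frontier Ω ∧ y ∈ frontier Ω) → ev v x = ev v y
    | _, _, .inl rfl => rfl
    | _, _, .inr ⟨hx, hy⟩ => (hbv _ hx v).trans (hbv _ hy v).symm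
  exact sum_mul_eq_of_sign β _ (fun i h => heval ((hcluster i).1 h))
    (fun i h => heval ((hcluster i).2 h))

lemma pointEnergy_lt_zero_of_forall_le {Ω : Set P} (hΩ : Ω.Nonempty)
    (hint : ∀ x ∈ Ω, ∃ v, ev v x ≠ 0) (ha : ∀ v, v ≠ 0 → 0 < a v v) {β : ι → ℝ}
    (hβ : ∑ i, β i ≠ 0) {u : V} {X : ι → P}
    (hmin : ∀ v Y, (∀ i, Y i ∈ closure Ω) → pointEnergy a ev β u X ≤ pointEnergy a ev β v Y) :
    pointEnergy a ev β u X < 0 := by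
  obtain ⟨x₀, hx₀⟩ := hΩ
  obtain ⟨w, hw⟩ := hint x₀ hx₀
  have hw0 : w ≠ 0 := by rintro rfl; simp at hw
  obtain ⟨v, hv⟩ := exists_pointEnergy_lt_zero a ev hβ (ha w hw0) hw
  exact (hmin v _ fun _ => subset_closure hx₀).trans_lt hv

theorem mem_of_abs_negWeight_lt_abs_posWeight {Ω : Set P} (hΩ : Ω.Nonempty)
    (hbv : ∀ x ∈ frontier Ω, ∀ v, ev v x = 0) (hint : ∀ x ∈ Ω, ∃ v, ev v x ≠ 0)
    (ha : ∀ v, v ≠ 0 → 0 < a v v) {β : ι → ℝ} {u : V} {X : ι → P}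
    (hmin : ∀ v Y, (∀ i, Y i ∈ closure Ω) → pointEnergy a ev β u X ≤ pointEnergy a ev β v Y)
    {Xp Xm : P} (hXp : Xp ∈ closure Ω) (hXm : Xm ∈ closure Ω)
    (hcluster : ∀ i,
      (0 < β i → (X i = Xp ∨ (X i ∈ frontier Ω ∧ Xp ∈ frontier Ω))) ∧
      (β i < 0 → (X i = Xm ∨ (X i ∈ frontier Ω ∧ Xm ∈ frontier Ω))))
    (hβ : |negWeight β| < |posWeight β|) : Xp ∈ Ω := by
  by_contra hXpΩ
  have hXpf : Xp ∈ frontier Ω := ⟨hXp, fun h => hXpΩ (interior_subset h)⟩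
  have hvanish : ∀ v, ev v Xp = 0 := hbv Xp hXpf
  have hβp := posWeight_nonneg β
  have hβm := negWeight_nonpos β
  rw [abs_of_nonneg hβp, abs_of_nonpos hβm] at hβ
  set m := ev u Xm
  have hE : pointEnergy a ev β u X = 1 / 2 * a u u - negWeight β * m := by
    rw [pointEnergy, sum_mul_ev_eq_of_cluster ev hbv hcluster, hvanish, mul_zero, zero_add]
  have hEneg : pointEnergy a ev β u X < 0 :=
    pointEnergy_lt_zero_of_forall_le a ev hΩ hint ha
      (by rw [sum_eq_posWeight_add_negWeight]; linarith) hmin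
  have hau : 0 ≤ a u u := by
    rcases eq_or_ne u 0 with rfl | hu
    · simp
    · exact (ha u hu).le
  have hβm0 : negWeight β ≠ 0 := by
    intro h
    rw [hE, h, zero_mul] at hEneg
    linarith
  set c := posWeight β / negWeight β
  have hc : c ^ 2 * negWeight β = c * posWeight β := by
    rw [sq, mul_assoc, div_mul_cancel₀ _ hβm0]
  have hc2 : 1 < c ^ 2 := by
    rw [div_pow, one_lt_div (by positivity)]
    nlinarith
  clear_value c
  set Y : ι → P := fun i => if 0 < β i then Xm else Xp
  have hY : pointEnergy a ev β (c • u) Y = c ^ 2 * pointEnergy a ev β u X := by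
    have hsum : ∑ i, β i * ev u (Y i) = posWeight β * m := by
      rw [sum_mul_eq_of_sign β _ (p := m) (q := 0) (fun i h => by simp [Y, h, m])
        (fun i h => by simp [Y, h.not_gt, hvanish]), mul_zero, add_zero]
    rw [pointEnergy_smul, hsum, hE]
    linear_combination m * hc
  have := hmin (c • u) Y fun i => by by_cases h : 0 < β i <;> simp [Y, h, hXm, hXp]
  rw [hY] at this
  nlinarith

end PointEnergy

theorem stmt16_general
    (Ω : Set (EuclideanSpace ℝ (Fin 2)))
    (hΩne : Ω.Nonempty)
    {V : Type*} [NormedAddCommGroup V] [InnerProductSpace ℝ V]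
    (ev : V →ₗ[ℝ] (EuclideanSpace ℝ (Fin 2) → ℝ))
    (hbv : ∀ x ∈ frontier Ω, ∀ v : V, ev v x = 0)
    (hint : ∀ x ∈ Ω, ∃ v : V, ev v x ≠ 0)
    (a : V →ₗ[ℝ] V →ₗ[ℝ] ℝ)
    (γ : ℝ) (hγ : 0 < γ)
    (hcoer : ∀ v, γ * ‖v‖ ^ 2 ≤ a v v)
    {N : ℕ} (β : Fin N → ℝ)
    (u : V) (X : Fin N → EuclideanSpace ℝ (Fin 2))
    (hmin : ∀ (v : V) (Y : Fin N → EuclideanSpace ℝ (Fin 2)),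
      (∀ i, Y i ∈ closure Ω) →
        (1 / 2) * a u u - ∑ i, β i * ev u (X i) ≤
          (1 / 2) * a v v - ∑ i, β i * ev v (Y i))
    (Xp Xm : EuclideanSpace ℝ (Fin 2))
    (hXp : Xp ∈ closure Ω) (hXm : Xm ∈ closure Ω)
    (hcluster : ∀ i,
      (0 < β i → (X i = Xp ∨ (X i ∈ frontier Ω ∧ Xp ∈ frontier Ω))) ∧
      (β i < 0 → (X i = Xm ∨ (X i ∈ frontier Ω ∧ Xm ∈ frontier Ω)))) :
    (|∑ i ∈ Finset.univ.filter (fun i => 0 < β i), β i| >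
        |∑ i ∈ Finset.univ.filter (fun i => β i < 0), β i| → Xp ∈ Ω) ∧
    (|∑ i ∈ Finset.univ.filter (fun i => 0 < β i), β i| <
        |∑ i ∈ Finset.univ.filter (fun i => β i < 0), β i| → Xm ∈ Ω) := by
  have ha : ∀ v : V, v ≠ 0 → 0 < a v v := fun v hv =>
    lt_of_lt_of_le (by have := norm_pos_iff.mpr hv; positivity) (hcoer v)
  refine ⟨mem_of_abs_negWeight_lt_abs_posWeight a ev hΩne hbv hint ha hmin hXp hXm hcluster,
    fun h => mem_of_abs_negWeight_lt_abs_posWeight a ev hΩne hbv hint ha (β := -β) (u := -u)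
      ?_ hXm hXp (fun i => ⟨fun hi => (hcluster i).2 (neg_pos.mp hi),
        fun hi => (hcluster i).1 (neg_lt_zero.mp hi)⟩) ?_⟩
  · intro v Y hY
    rw [pointEnergy_neg_neg, ← neg_neg v, pointEnergy_neg_neg]
    exact hmin _ _ hY
  · rwa [negWeight_neg, posWeight_neg, abs_neg, abs_neg]

/-- location of the cluster points.  Let `(u,X)` be a global minimizer
of the point force energy and `X⁺, X⁻` cluster points of the positive- and
negative-sign forces (as produced by the clustering theorem).  With
`β⁺ = Σ_{βᵢ>0} βᵢ` and `β⁻ = Σ_{βᵢ<0} βᵢ`: if `|β⁺| > |β⁻|` then `X⁺` lies in the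
interior `Ω`, and if `|β⁺| < |β⁻|` then `X⁻ ∈ Ω`.  The space `V` is modelled
abstractly via the evaluation map `ev` as in the clustering setting. -/
theorem stmt16
    (Ω : Set (EuclideanSpace ℝ (Fin 2)))
    (hΩopen : IsOpen Ω) (hΩbdd : Bornology.IsBounded Ω)
    (hΩconv : Convex ℝ Ω) (hΩne : Ω.Nonempty)
    {V : Type*} [NormedAddCommGroup V] [InnerProductSpace ℝ V] [CompleteSpace V]
    (ev : V →ₗ[ℝ] (EuclideanSpace ℝ (Fin 2) → ℝ))
    (hev_cont : ∀ v : V, ContinuousOn (ev v) (closure Ω))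
    (hev_bdd : ∃ C : ℝ, ∀ (v : V), ∀ x ∈ closure Ω, |ev v x| ≤ C * ‖v‖)
    (hbv : ∀ x ∈ frontier Ω, ∀ v : V, ev v x = 0)
    (hint : ∀ x ∈ Ω, ∃ v : V, ev v x ≠ 0)
    (hsep : ∀ x ∈ Ω, ∀ y ∈ closure Ω, x ≠ y → ∃ v : V, ev v x ≠ ev v y)
    (a : V →ₗ[ℝ] V →ₗ[ℝ] ℝ) (hsymm : ∀ v w, a v w = a w v)
    (γ Γ : ℝ) (hγ : 0 < γ) (hΓ : 0 < Γ)
    (hcoer : ∀ v, γ * ‖v‖ ^ 2 ≤ a v v)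
    (hbound : ∀ v w, a v w ≤ Γ * ‖v‖ * ‖w‖)
    {N : ℕ} (hN : 0 < N) (β : Fin N → ℝ) (hβ : ∀ i, β i ≠ 0)
    (u : V) (X : Fin N → EuclideanSpace ℝ (Fin 2))
    (hX : ∀ i, X i ∈ closure Ω)
    (hmin : ∀ (v : V) (Y : Fin N → EuclideanSpace ℝ (Fin 2)),
      (∀ i, Y i ∈ closure Ω) →
        (1 / 2) * a u u - ∑ i, β i * ev u (X i) ≤
          (1 / 2) * a v v - ∑ i, β i * ev v (Y i))
    (Xp Xm : EuclideanSpace ℝ (Fin 2))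
    (hXp : Xp ∈ closure Ω) (hXm : Xm ∈ closure Ω)
    (hcluster : ∀ i,
      (0 < β i → (X i = Xp ∨ (X i ∈ frontier Ω ∧ Xp ∈ frontier Ω))) ∧
      (β i < 0 → (X i = Xm ∨ (X i ∈ frontier Ω ∧ Xm ∈ frontier Ω)))) :
    (|∑ i ∈ Finset.univ.filter (fun i => 0 < β i), β i| >
        |∑ i ∈ Finset.univ.filter (fun i => β i < 0), β i| → Xp ∈ Ω) ∧
    (|∑ i ∈ Finset.univ.filter (fun i => 0 < β i), β i| <
        |∑ i ∈ Finset.univ.filter (fun i => β i < 0), β i| → Xm ∈ Ω) :=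
  stmt16_general Ω hΩne ev hbv hint a γ hγ hcoer β u X hmin Xp Xm hXp hXm hcluster
end

section
/- Let V be a Hilbert space, X a Hilbert space with orthogonal projection P having closed kernel X₀, T : V → X bounded linear, b ∈ X, and J(v) = ½a(v,v) − ℓ(v) with a symmetric continuous coercive and ℓ ∈ V'. For ε > 0, the pair (u_ε, x_ε) ∈ V × X₀ minimizes J(v) + (1/(2ε))‖Tv − (y + b)‖_X² over V × X₀ if and only if u_ε is the unique minimizer over V of J(v) + (1/(2ε))‖P(Tv − b)‖_X² and x_ε = (I − P)(T u_ε − b). -/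
open scoped RealInnerProductSpace

set_option maxHeartbeats 1600000 in
/-- equivalence of the penalized parametrized problem and the projected
penalized problem.  `(u_ε, x_ε) ∈ V × X₀` minimizes
`J(v) + (1/(2ε))‖Tv − (y + b)‖²` over `V × X₀` if and only if `u_ε` is the unique
minimizer over `V` of `J(v) + (1/(2ε))‖P(Tv − b)‖²` and
`x_ε = (I − P)(T u_ε − b)`, where `P` is the orthogonal projection with kernel
`X₀`. -/
theorem stmt18
    {V : Type*} [NormedAddCommGroup V] [InnerProductSpace ℝ V] [CompleteSpace V]
    {X : Type*} [NormedAddCommGroup X] [InnerProductSpace ℝ X] [CompleteSpace X]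
    (a : V →ₗ[ℝ] V →ₗ[ℝ] ℝ) (hsymm : ∀ v w, a v w = a w v)
    (γ Γ : ℝ) (hγ : 0 < γ) (hΓ : 0 < Γ)
    (hcoer : ∀ v, γ * ‖v‖ ^ 2 ≤ a v v)
    (hbound : ∀ v w, a v w ≤ Γ * ‖v‖ * ‖w‖)
    (ℓ : V →L[ℝ] ℝ)
    (J : V → ℝ) (hJ : ∀ v, J v = (1 / 2) * a v v - ℓ v)
    (X₀ : Submodule ℝ X) (hX₀closed : IsClosed (X₀ : Set X))
    (P : X →L[ℝ] X) (hPidem : ∀ x, P (P x) = P x)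
    (hPsym : ∀ x y, ⟪P x, y⟫ = ⟪x, P y⟫)
    (hPker : ∀ x, P x = 0 ↔ x ∈ X₀)
    (T : V →L[ℝ] X) (b : X)
    (ε : ℝ) (hε : 0 < ε)
    (uε : V) (xε : X) (hxε_mem : xε ∈ X₀) :
    ((∀ (v : V), ∀ y ∈ X₀,
        J uε + 1 / (2 * ε) * ‖T uε - (xε + b)‖ ^ 2 ≤
          J v + 1 / (2 * ε) * ‖T v - (y + b)‖ ^ 2)) ↔
      ((∀ v : V,
          J uε + 1 / (2 * ε) * ‖P (T uε - b)‖ ^ 2 ≤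
            J v + 1 / (2 * ε) * ‖P (T v - b)‖ ^ 2) ∧
        (∀ w : V,
          (∀ v : V,
            J w + 1 / (2 * ε) * ‖P (T w - b)‖ ^ 2 ≤
              J v + 1 / (2 * ε) * ‖P (T v - b)‖ ^ 2) → w = uε) ∧
        xε = (T uε - b) - P (T uε - b)) := by
  have hc : (0:ℝ) < 1 / (2 * ε) := by positivity
  -- key orthogonality lemma
  have key : ∀ z y : X, y ∈ X₀ → ‖z - y‖ ^ 2 = ‖P z‖ ^ 2 + ‖z - P z - y‖ ^ 2 := by
    intro z y hy
    have hPy : P y = 0 := (hPker y).mpr hy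
    have h1 : ⟪P z, P z⟫ = ⟪P z, z⟫ := by
      have h := hPsym z (P z)
      rw [hPidem z] at h
      rw [h, real_inner_comm]
    have h2 : ⟪P z, y⟫ = 0 := by rw [hPsym, hPy, inner_zero_right]
    have horth : ⟪P z, z - P z - y⟫ = 0 := by
      rw [inner_sub_right, inner_sub_right, h1, h2]; ring
    have hz : z - y = P z + (z - P z - y) := by abel
    rw [hz, norm_add_sq_real, horth]; ring
  have hmem : ∀ z : X, z - P z ∈ X₀ := by
    intro z
    exact (hPker _).mp (by rw [map_sub, hPidem, sub_self])
  have hvec : ∀ v : V, T v - ((T v - b - P (T v - b)) + b) = P (T v - b) := by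
    intro v; abel
  constructor
  · intro H
    have hmin : ∀ v : V,
        J uε + 1 / (2 * ε) * ‖P (T uε - b)‖ ^ 2 ≤
          J v + 1 / (2 * ε) * ‖P (T v - b)‖ ^ 2 := by
      intro v
      have h1 := H v ((T v - b) - P (T v - b)) (hmem _)
      rw [hvec v] at h1
      have h2 : ‖P (T uε - b)‖ ^ 2 ≤ ‖T uε - (xε + b)‖ ^ 2 := by
        have hv : T uε - (xε + b) = (T uε - b) - xε := by abel
        rw [hv, key (T uε - b) xε hxε_mem]
        nlinarith [sq_nonneg ‖T uε - b - P (T uε - b) - xε‖]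
      nlinarith
    have hxe : xε = (T uε - b) - P (T uε - b) := by
      have h1 := H uε ((T uε - b) - P (T uε - b)) (hmem _)
      rw [hvec uε] at h1
      have hv : T uε - (xε + b) = (T uε - b) - xε := by abel
      rw [hv, key (T uε - b) xε hxε_mem] at h1
      have h3 : ‖T uε - b - P (T uε - b) - xε‖ ^ 2 ≤ 0 := by nlinarith
      have h4 : ‖T uε - b - P (T uε - b) - xε‖ = 0 := by
        nlinarith [norm_nonneg (T uε - b - P (T uε - b) - xε)]
      have h5 : T uε - b - P (T uε - b) - xε = 0 := norm_eq_zero.mp h4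
      have := sub_eq_zero.mp h5
      exact this.symm
    refine ⟨hmin, ?_, hxe⟩
    intro w hw
    have hwu : J w + 1 / (2 * ε) * ‖P (T w - b)‖ ^ 2 =
        J uε + 1 / (2 * ε) * ‖P (T uε - b)‖ ^ 2 :=
      le_antisymm (hw uε) (hmin w)
    obtain ⟨m, hm⟩ : ∃ m : V, m = (2:ℝ)⁻¹ • (w + uε) := ⟨_, rfl⟩
    obtain ⟨d, hd⟩ : ∃ d : V, d = (2:ℝ)⁻¹ • (w - uε) := ⟨_, rfl⟩
    have hA : a m m + a d d = 2⁻¹ * (a w w + a uε uε) := by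
      simp only [hm, hd, map_add, map_sub, map_smul, LinearMap.add_apply,
        LinearMap.sub_apply, LinearMap.smul_apply, smul_eq_mul]
      ring
    have hL : (ℓ m : ℝ) = 2⁻¹ * (ℓ w + ℓ uε) := by
      simp [hm, map_add, map_smul]
      ring
    have hTm : T m - b = (2:ℝ)⁻¹ • ((T w - b) + (T uε - b)) := by
      simp only [hm, map_smul, map_add]
      module
    have hpm : P (T m - b) = (2:ℝ)⁻¹ • (P (T w - b) + P (T uε - b)) := by
      rw [hTm, map_smul, map_add]
    have hpen : ‖P (T m - b)‖ ^ 2 ≤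
        2⁻¹ * (‖P (T w - b)‖ ^ 2 + ‖P (T uε - b)‖ ^ 2) := by
      have h1 : ‖P (T m - b)‖ = 2⁻¹ * ‖P (T w - b) + P (T uε - b)‖ := by
        rw [hpm, norm_smul]; norm_num
      have ht : ‖P (T w - b) + P (T uε - b)‖ ≤ ‖P (T w - b)‖ + ‖P (T uε - b)‖ :=
        norm_add_le _ _
      nlinarith [norm_nonneg (P (T w - b) + P (T uε - b)),
        norm_nonneg (P (T w - b)), norm_nonneg (P (T uε - b)),
        sq_nonneg (‖P (T w - b)‖ - ‖P (T uε - b)‖)]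
    have hFm := hmin m
    have hcoerd := hcoer d
    simp only [hJ] at hFm hwu
    have hp2 : 1 / (2 * ε) * ‖P (T m - b)‖ ^ 2 ≤
        1 / (2 * ε) * (2⁻¹ * (‖P (T w - b)‖ ^ 2 + ‖P (T uε - b)‖ ^ 2)) :=
      mul_le_mul_of_nonneg_left hpen hc.le
    have hadd : a d d ≤ 0 := by linarith
    have hgd : γ * ‖d‖ ^ 2 ≤ 0 := le_trans hcoerd hadd
    have hdz : ‖d‖ ^ 2 ≤ 0 := by nlinarith [sq_nonneg ‖d‖]
    have : d = 0 := by
      have h4 : ‖d‖ = 0 := by nlinarith [norm_nonneg d]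
      exact norm_eq_zero.mp h4
    have hsub : w - uε = 0 := by
      have h2 : ((2:ℝ)⁻¹)⁻¹ • d = w - uε := by
        rw [hd, smul_smul]; norm_num
      rw [this, smul_zero] at h2
      exact h2.symm
    exact sub_eq_zero.mp hsub
  · rintro ⟨hmin, -, hxe⟩
    intro v y hy
    have hx : T uε - (xε + b) = P (T uε - b) := by rw [hxe]; abel
    rw [hx]
    have h2 : ‖P (T v - b)‖ ^ 2 ≤ ‖T v - (y + b)‖ ^ 2 := by
      have hv : T v - (y + b) = (T v - b) - y := by abel
      rw [hv, key (T v - b) y hy]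
      nlinarith [sq_nonneg ‖T v - b - P (T v - b) - y‖]
    nlinarith [hmin v]
end
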